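/- arXiv:1803.03070 — 8 statements merged into one kernel-verified Lean document; each statement's English description precedes it below -/
import Mathlib

section
/- Let g = s₁⋯s_k be a product of reflections in GL(V) with fixed hyperplanes H₁, …, H_k and moved lines spanned by v₁, …, v_k. If the intersection H₁ ∩ ⋯ ∩ H_k has codimension k, then im(g − 1) equals the span of v₁, …, v_k. -/
open Module

section Aux

variable {F V : Type*} [Field F] [AddCommGroup V] [Module F V]

lemma prodFix (l : List (V ≃ₗ[F] V)) (x : V) (h : ∀ t ∈ l, t x = x) : l.prod x = x := by
  induction l with
  | nil => rfl
  | cons a l ih =>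
    show a (l.prod x) = x
    rw [ih (fun t ht => h t (List.mem_cons_of_mem _ ht))]
    exact h a (List.mem_cons_self)

lemma prodMem (l : List (V ≃ₗ[F] V)) (M : Submodule F V)
    (h : ∀ t ∈ l, ∀ m ∈ M, t m ∈ M) (m : V) (hm : m ∈ M) : l.prod m ∈ M := by
  induction l with
  | nil => exact hm
  | cons a l ih =>
    show a (l.prod m) ∈ M
    exact h a (List.mem_cons_self) _ (ih (fun t ht => h t (List.mem_cons_of_mem _ ht)))

variable [FiniteDimensional F V]

lemma codim_antitone {A B : Submodule F V} (h : A ≤ B) :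
    finrank F (V ⧸ B) ≤ finrank F (V ⧸ A) := by
  have h1 := Submodule.finrank_quotient_add_finrank A
  have h2 := Submodule.finrank_quotient_add_finrank B
  have h3 : finrank F A ≤ finrank F B := Submodule.finrank_mono h
  omega

lemma codim_inf_le (A B : Submodule F V) :
    finrank F (V ⧸ (A ⊓ B)) ≤ finrank F (V ⧸ A) + finrank F (V ⧸ B) := by
  have h1 := Submodule.finrank_sup_add_finrank_inf_eq A B
  have h2 : finrank F (A ⊔ B : Submodule F V) ≤ finrank F V := Submodule.finrank_le _
  have h3 := Submodule.finrank_quotient_add_finrank (A ⊓ B)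
  have h4 := Submodule.finrank_quotient_add_finrank A
  have h5 := Submodule.finrank_quotient_add_finrank B
  omega

lemma codim_ker_le_one (f : V →ₗ[F] V) (w : V)
    (h : LinearMap.range f = Submodule.span F {w}) :
    finrank F (V ⧸ LinearMap.ker f) ≤ 1 := by
  rw [f.quotKerEquivRange.finrank_eq, h]
  rcases eq_or_ne w 0 with hw | hw
  · rw [hw, Submodule.span_zero_singleton]
    have : finrank F (⊥ : Submodule F V) = 0 := finrank_bot F V
    omega
  · rw [finrank_span_singleton hw]

lemma iInf_fin_succ {k : ℕ} (f : Fin (k + 1) → Submodule F V) :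
    ⨅ i, f i = (⨅ i : Fin k, f i.castSucc) ⊓ f (Fin.last k) := by
  apply le_antisymm
  · exact le_inf (le_iInf fun i => iInf_le _ _) (iInf_le _ _)
  · refine le_iInf fun i => ?_
    induction i using Fin.lastCases with
    | last => exact inf_le_right
    | cast i => exact inf_le_left.trans (iInf_le _ i)

lemma codim_iInf_le (k : ℕ) (f : Fin k → Submodule F V)
    (h : ∀ i, finrank F (V ⧸ f i) ≤ 1) : finrank F (V ⧸ ⨅ i, f i) ≤ k := by
  induction k with
  | zero =>
    rw [iInf_of_empty]
    have := Submodule.finrank_quotient_add_finrank (⊤ : Submodule F V)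
    rw [finrank_top] at this
    omega
  | succ k ih =>
    rw [iInf_fin_succ]
    calc finrank F (V ⧸ ((⨅ i : Fin k, f i.castSucc) ⊓ f (Fin.last k)))
        ≤ finrank F (V ⧸ ⨅ i : Fin k, f i.castSucc) + finrank F (V ⧸ f (Fin.last k)) :=
          codim_inf_le _ _
      _ ≤ k + 1 := add_le_add (ih _ (fun i => h _)) (h _)

theorem auxMain (k : ℕ) : ∀ (s : Fin k → (V ≃ₗ[F] V)) (v : Fin k → V),
    (∀ i, LinearMap.range ((s i : V →ₗ[F] V) - 1) = Submodule.span F {v i}) →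
    finrank F (V ⧸ ⨅ i, LinearMap.ker ((s i : V →ₗ[F] V) - 1)) = k →
    LinearMap.range ((((List.ofFn s).prod : V ≃ₗ[F] V) : V →ₗ[F] V) - 1)
      = Submodule.span F (Set.range v) := by
  induction k with
  | zero =>
    intro s v hv hcodim
    have h1 : (List.ofFn s) = [] := by simp
    rw [h1]
    have : Set.range v = ∅ := Set.range_eq_empty v
    rw [this, Submodule.span_empty]
    rw [Submodule.eq_bot_iff]
    rintro y ⟨x, rfl⟩
    have : ((((List.prod ([] : List (V ≃ₗ[F] V))) : V ≃ₗ[F] V) : V →ₗ[F] V) - 1) x = x - x := rfl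
    rw [this, sub_self]
  | succ k ih =>
    intro s v hv hcodim
    set s' : Fin k → (V ≃ₗ[F] V) := fun i => s i.castSucc with hs'
    set v' : Fin k → V := fun i => v i.castSucc with hv'
    set g' : V ≃ₗ[F] V := (List.ofFn s').prod with hg'
    have hprod : (List.ofFn s).prod = g' * s (Fin.last k) := by
      rw [List.ofFn_succ' s, List.prod_concat]
    set H : Submodule F V := LinearMap.ker ((s (Fin.last k) : V →ₗ[F] V) - 1) with hH
    set K' : Submodule F V := ⨅ i, LinearMap.ker ((s' i : V →ₗ[F] V) - 1) with hK'
    have hsplit : (⨅ i, LinearMap.ker ((s i : V →ₗ[F] V) - 1)) = K' ⊓ H :=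
      iInf_fin_succ _
    rw [hsplit] at hcodim
    have hHcodim : finrank F (V ⧸ H) ≤ 1 := codim_ker_le_one _ _ (hv (Fin.last k))
    have hK'le : finrank F (V ⧸ K') ≤ k :=
      codim_iInf_le k _ (fun i => codim_ker_le_one _ _ (hv i.castSucc))
    have hKHle : finrank F (V ⧸ (K' ⊓ H)) ≤ finrank F (V ⧸ K') + finrank F (V ⧸ H) :=
      codim_inf_le _ _
    have hK'eq : finrank F (V ⧸ K') = k := by omega
    -- K' is not contained in H
    have hnotle : ¬ K' ≤ H := by
      intro hle
      have : K' ⊓ H = K' := inf_eq_left.mpr hle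
      rw [this] at hcodim
      omega
    -- IH
    have hM' := ih s' v' (fun i => hv i.castSucc) hK'eq
    set M' := Submodule.span F (Set.range v') with hM'def
    set M := Submodule.span F (Set.range v) with hMdef
    have hM'leM : M' ≤ M :=
      Submodule.span_mono (Set.range_comp_subset_range _ v)
    -- H ⊔ K' = ⊤
    have hsup : H ⊔ K' = ⊤ := by
      have hne : H ≠ H ⊔ K' := by
        intro h
        exact hnotle (le_sup_right.trans h.ge)
      have hlt : H < H ⊔ K' := lt_of_le_of_ne le_sup_left hne
      have h1 : finrank F H < finrank F (H ⊔ K' : Submodule F V) :=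
        Submodule.finrank_lt_finrank_of_lt hlt
      have h2 := Submodule.finrank_quotient_add_finrank H
      have h3 : finrank F (H ⊔ K' : Submodule F V) ≤ finrank F V :=
        Submodule.finrank_le _
      exact Submodule.eq_top_of_finrank_eq (by omega)
    -- g' fixes K'
    have hfix : ∀ x ∈ K', g' x = x := by
      intro x hx
      refine prodFix _ _ ?_
      intro t ht
      rw [List.mem_ofFn] at ht
      obtain ⟨i, rfl⟩ := ht
      have := (Submodule.mem_iInf _).mp hx i
      rw [LinearMap.mem_ker, LinearMap.sub_apply, Module.End.one_apply, sub_eq_zero] at this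
      exact this
    -- g' maps M into M
    have hmapsM : ∀ m ∈ M, g' m ∈ M := by
      intro m hm
      refine prodMem _ _ ?_ _ hm
      intro t ht m hm
      rw [List.mem_ofFn] at ht
      obtain ⟨i, rfl⟩ := ht
      have h1 : ((s' i : V →ₗ[F] V) - 1) m ∈ M := by
        have : ((s' i : V →ₗ[F] V) - 1) m ∈ Submodule.span F {v' i} := by
          rw [← hv i.castSucc]; exact LinearMap.mem_range_self _ m
        refine Submodule.span_le.mpr ?_ this
        rw [Set.singleton_subset_iff]
        exact Submodule.subset_span ⟨i.castSucc, rfl⟩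
      have h2 : (s' i) m = m + ((s' i : V →ₗ[F] V) - 1) m := by
        simp [LinearMap.sub_apply, Module.End.one_apply]
      rw [h2]
      exact Submodule.add_mem _ hm h1
    rw [hprod]
    set R := LinearMap.range (((g' * s (Fin.last k) : V ≃ₗ[F] V) : V →ₗ[F] V) - 1) with hR
    have happly : ∀ x : V, (((g' * s (Fin.last k) : V ≃ₗ[F] V) : V →ₗ[F] V) - 1) x
        = g' ((s (Fin.last k)) x) - x := by
      intro x; rfl
    -- M' ≤ R
    have hM'leR : M' ≤ R := by
      intro m hm
      rw [← hM'] at hm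
      obtain ⟨y, rfl⟩ := hm
      obtain ⟨h, hh, u, hu, rfl⟩ : ∃ h ∈ H, ∃ u ∈ K', h + u = y := by
        have : y ∈ H ⊔ K' := by rw [hsup]; trivial
        exact Submodule.mem_sup.mp this
      refine ⟨h, ?_⟩
      rw [happly]
      have hsh : (s (Fin.last k)) h = h := by
        have := hh
        rw [hH, LinearMap.mem_ker, LinearMap.sub_apply, Module.End.one_apply, sub_eq_zero] at this
        exact this
      rw [hsh]
      have hgu : g' u = u := hfix u hu
      simp only [LinearMap.sub_apply, Module.End.one_apply, LinearEquiv.coe_coe, map_add, ← hg', hgu]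
      abel
    -- v last ∈ R
    have hvlast : v (Fin.last k) ∈ R := by
      obtain ⟨x, hxK, hxH⟩ : ∃ x ∈ K', x ∉ H := Set.not_subset.mp (fun h => hnotle h)
      have htx : ((s (Fin.last k) : V →ₗ[F] V) - 1) x ∈ Submodule.span F {v (Fin.last k)} := by
        rw [← hv (Fin.last k)]; exact LinearMap.mem_range_self _ x
      obtain ⟨c, hc⟩ := Submodule.mem_span_singleton.mp htx
      have htxne : ((s (Fin.last k) : V →ₗ[F] V) - 1) x ≠ 0 := fun h => hxH h
      have hcne : c ≠ 0 := by rintro rfl; rw [zero_smul] at hc; exact htxne hc.symm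
      have hgx : (((g' * s (Fin.last k) : V ≃ₗ[F] V) : V →ₗ[F] V) - 1) x = c • g' (v (Fin.last k)) := by
        rw [happly]
        have hsx : (s (Fin.last k)) x = x + c • v (Fin.last k) := by
          rw [hc, LinearMap.sub_apply, Module.End.one_apply, LinearEquiv.coe_coe]
          abel
        rw [hsx, map_add, hfix x hxK, map_smul]
        abel
      have hgv : g' (v (Fin.last k)) ∈ R := by
        have h1 : c • g' (v (Fin.last k)) ∈ R := ⟨x, hgx⟩
        have := Submodule.smul_mem R c⁻¹ h1
        rwa [← smul_assoc, smul_eq_mul, inv_mul_cancel₀ hcne, one_smul] at this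
      have hgv' : g' (v (Fin.last k)) = v (Fin.last k) + ((g' : V →ₗ[F] V) - 1) (v (Fin.last k)) := by
        simp [LinearMap.sub_apply, Module.End.one_apply]
      have hrest : ((g' : V →ₗ[F] V) - 1) (v (Fin.last k)) ∈ R := by
        apply hM'leR
        rw [← hM']
        exact LinearMap.mem_range_self _ _
      have : v (Fin.last k) = g' (v (Fin.last k)) - ((g' : V →ₗ[F] V) - 1) (v (Fin.last k)) := by
        rw [hgv']; abel
      rw [this]
      exact Submodule.sub_mem _ hgv hrest
    apply le_antisymm
    · rintro y ⟨x, rfl⟩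
      rw [happly]
      have htx : ((s (Fin.last k) : V →ₗ[F] V) - 1) x ∈ M := by
        have h1 : ((s (Fin.last k) : V →ₗ[F] V) - 1) x ∈ Submodule.span F {v (Fin.last k)} := by
          rw [← hv (Fin.last k)]; exact LinearMap.mem_range_self _ x
        refine Submodule.span_le.mpr ?_ h1
        rw [Set.singleton_subset_iff]
        exact Submodule.subset_span ⟨Fin.last k, rfl⟩
      have hsx : (s (Fin.last k)) x = x + ((s (Fin.last k) : V →ₗ[F] V) - 1) x := by
        simp [LinearMap.sub_apply, Module.End.one_apply]
      rw [hsx, map_add]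
      have h1 : g' x - x ∈ M := by
        apply hM'leM
        rw [← hM']
        exact ⟨x, rfl⟩
      have h2 : g' (((s (Fin.last k) : V →ₗ[F] V) - 1) x) ∈ M := hmapsM _ htx
      have : g' x + g' (((s (Fin.last k) : V →ₗ[F] V) - 1) x) - x
          = (g' x - x) + g' (((s (Fin.last k) : V →ₗ[F] V) - 1) x) := by abel
      rw [this]
      exact Submodule.add_mem _ h1 h2
    · rw [hMdef, Submodule.span_le]
      rintro w ⟨i, rfl⟩
      induction i using Fin.lastCases with
      | last => exact hvlast
      | cast i =>
        apply hM'leR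
        exact Submodule.subset_span ⟨i, rfl⟩

end Aux

/-- A reflection in `GL(V)`: an invertible linear map whose fixed space
`ker (t - 1)` has codimension 1. -/
def IsLinRefl {F V : Type*} [Field F] [AddCommGroup V] [Module F V]
    (t : V ≃ₗ[F] V) : Prop :=
  Module.finrank F (V ⧸ LinearMap.ker ((t : V →ₗ[F] V) - 1)) = 1

theorem stmt3 {F V : Type*} [Field F] [AddCommGroup V] [Module F V] [FiniteDimensional F V]
    (k : ℕ) (s : Fin k → (V ≃ₗ[F] V)) (hs : ∀ i, IsLinRefl (s i))
    (v : Fin k → V)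
    (hv : ∀ i, LinearMap.range ((s i : V →ₗ[F] V) - 1) = Submodule.span F {v i})
    (g : V ≃ₗ[F] V) (hg : g = (List.ofFn s).prod)
    (hcodim : Module.finrank F (V ⧸ ⨅ i, LinearMap.ker ((s i : V →ₗ[F] V) - 1)) = k) :
    LinearMap.range ((g : V →ₗ[F] V) - 1) = Submodule.span F (Set.range v) := by
  subst hg
  exact auxMain k s v hv hcodim
end

section
/- Let g be an element of GL(V) and let (s₁, …, s_k) be reflections with g = s₁⋯s_k, fixed hyperplanes H₁, …, H_k, and moved lines spanned by v₁, …, v_k. Then the reflection length of g equals k if and only if both the codimension of H₁ ∩ ⋯ ∩ H_k equals k and the dimension of span{v₁, …, v_k} equals k. -/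
open Module

/-- Reflection length in the general linear group. -/
noncomputable def reflLen {F V : Type*} [Field F] [AddCommGroup V] [Module F V]
    (g : V ≃ₗ[F] V) : ℕ :=
  sInf {n : ℕ | ∃ l : List (V ≃ₗ[F] V), (∀ s ∈ l, IsLinRefl s) ∧ l.prod = g ∧ l.length = n}

namespace Stmt5Aux

set_option linter.unusedSectionVars false

variable {F V : Type*} [Field F] [AddCommGroup V] [Module F V]

/-- `t - 1` as a linear map. -/
def TT (t : V ≃ₗ[F] V) : V →ₗ[F] V := (t : V →ₗ[F] V) - 1

lemma TT_apply (t : V ≃ₗ[F] V) (x : V) : TT t x = t x - x := rfl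

lemma TT_one : TT (1 : V ≃ₗ[F] V) = 0 := by
  ext x; simp [TT_apply]

lemma mem_ker_TT {t : V ≃ₗ[F] V} {x : V} : x ∈ LinearMap.ker (TT t) ↔ t x = x := by
  simp [LinearMap.mem_ker, TT_apply, sub_eq_zero]

lemma TT_mul (a b : V ≃ₗ[F] V) :
    TT (a * b) = (TT a) ∘ₗ (b : V →ₗ[F] V) + TT b := by
  ext x
  simp only [TT, LinearMap.sub_apply, LinearMap.add_apply, LinearMap.comp_apply,
    LinearEquiv.coe_toLinearMap_mul, Module.End.mul_apply, Module.End.one_apply,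
    LinearEquiv.coe_coe]
  abel

lemma range_TT_mul_le (a b : V ≃ₗ[F] V) :
    LinearMap.range (TT (a * b)) ≤ LinearMap.range (TT a) ⊔ LinearMap.range (TT b) := by
  rw [TT_mul]
  rintro _ ⟨y, rfl⟩
  simp only [LinearMap.add_apply, LinearMap.comp_apply]
  exact Submodule.add_mem_sup ⟨b y, rfl⟩ ⟨y, rfl⟩

lemma ker_TT_mul (a b : V ≃ₗ[F] V) :
    LinearMap.ker (TT a) ⊓ LinearMap.ker (TT b) ≤ LinearMap.ker (TT (a * b)) := by
  rintro x ⟨ha, hb⟩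
  have hb' : b x = x := mem_ker_TT.mp hb
  have ha' : a x = x := mem_ker_TT.mp ha
  rw [mem_ker_TT]
  show a (b x) = x
  rw [hb', ha']

lemma range_TT_prod_le (l : List (V ≃ₗ[F] V)) (S : Submodule F V)
    (h : ∀ t ∈ l, LinearMap.range (TT t) ≤ S) :
    LinearMap.range (TT l.prod) ≤ S := by
  induction l with
  | nil => rw [List.prod_nil, TT_one]; simp
  | cons a l ih =>
      rw [List.prod_cons]
      exact (range_TT_mul_le a l.prod).trans
        (sup_le (h a (List.mem_cons_self)) (ih fun t ht => h t (List.mem_cons_of_mem a ht)))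

lemma ker_TT_prod_le (l : List (V ≃ₗ[F] V)) (K : Submodule F V)
    (h : ∀ t ∈ l, K ≤ LinearMap.ker (TT t)) :
    K ≤ LinearMap.ker (TT l.prod) := by
  induction l with
  | nil => rw [List.prod_nil, TT_one]; simp
  | cons a l ih =>
      rw [List.prod_cons]
      exact le_trans (le_inf (h a (List.mem_cons_self))
        (ih fun t ht => h t (List.mem_cons_of_mem a ht))) (ker_TT_mul a l.prod)

lemma ker_TT_inv (t : V ≃ₗ[F] V) : LinearMap.ker (TT t⁻¹) = LinearMap.ker (TT t) := by
  have ht : (t⁻¹ : V ≃ₗ[F] V) = t.symm := rfl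
  ext x
  rw [mem_ker_TT, mem_ker_TT, ht]
  constructor
  · intro h
    conv_lhs => rw [← h]
    exact t.apply_symm_apply x
  · intro h
    conv_lhs => rw [← h]
    exact t.symm_apply_apply x

variable [FiniteDimensional F V]

lemma finrank_quot_eq (f : V →ₗ[F] V) :
    finrank F (V ⧸ LinearMap.ker f) = finrank F (LinearMap.range f) :=
  f.quotKerEquivRange.finrank_eq

lemma isLinRefl_iff (t : V ≃ₗ[F] V) :
    IsLinRefl t ↔ finrank F (LinearMap.range (TT t)) = 1 := by
  rw [IsLinRefl, ← finrank_quot_eq]; rfl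

lemma isLinRefl_inv {t : V ≃ₗ[F] V} (h : IsLinRefl t) : IsLinRefl t⁻¹ := by
  rw [IsLinRefl] at *
  rw [show ((t⁻¹ : V ≃ₗ[F] V) : V →ₗ[F] V) - 1 = TT t⁻¹ from rfl, ker_TT_inv]
  exact h

lemma finrank_sup_le (A B : Submodule F V) :
    finrank F ↥(A ⊔ B) ≤ finrank F A + finrank F B := by
  have := Submodule.finrank_sup_add_finrank_inf_eq A B
  omega

/-- Lemma A: subadditivity of reflection rank. -/
lemma finrank_range_TT_prod_le (l : List (V ≃ₗ[F] V)) (h : ∀ t ∈ l, IsLinRefl t) :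
    finrank F (LinearMap.range (TT l.prod)) ≤ l.length := by
  induction l with
  | nil => rw [List.prod_nil, TT_one]; simp
  | cons a l ih =>
      rw [List.prod_cons]
      have h1 : finrank F (LinearMap.range (TT a)) = 1 :=
        (isLinRefl_iff a).mp (h a (List.mem_cons_self))
      have h2 := ih fun t ht => h t (List.mem_cons_of_mem a ht)
      have h3 : finrank F (LinearMap.range (TT (a * l.prod)))
          ≤ finrank F ↥(LinearMap.range (TT a) ⊔ LinearMap.range (TT l.prod)) :=
        Submodule.finrank_mono (range_TT_mul_le a l.prod)
      have h4 := finrank_sup_le (LinearMap.range (TT a)) (LinearMap.range (TT l.prod))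
      simp only [List.length_cons]
      omega

lemma codim_antitone {A B : Submodule F V} (h : A ≤ B) :
    finrank F (V ⧸ B) ≤ finrank F (V ⧸ A) := by
  have hA := A.finrank_quotient_add_finrank
  have hB := B.finrank_quotient_add_finrank
  have := Submodule.finrank_mono (M := V) h
  omega

lemma codim_inf_le (A B : Submodule F V) :
    finrank F (V ⧸ (A ⊓ B)) ≤ finrank F (V ⧸ A) + finrank F (V ⧸ B) := by
  have e1 := Submodule.finrank_sup_add_finrank_inf_eq A B
  have e2 := A.finrank_quotient_add_finrank
  have e3 := B.finrank_quotient_add_finrank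
  have e4 := (A ⊓ B).finrank_quotient_add_finrank
  have e5 := (A ⊔ B).finrank_quotient_add_finrank
  have e6 : finrank F ↥(A ⊔ B) ≤ finrank F V := (A ⊔ B).finrank_le
  omega

lemma codim_top : finrank F (V ⧸ (⊤ : Submodule F V)) = 0 := by
  have h := (⊤ : Submodule F V).finrank_quotient_add_finrank
  rw [finrank_top] at h
  omega

lemma iInf_fin_succ {k : ℕ} (f : Fin (k + 1) → Submodule F V) :
    (⨅ i, f i) = f 0 ⊓ ⨅ i : Fin k, f i.succ := by
  apply le_antisymm
  · exact le_inf (iInf_le f 0) (le_iInf fun i => iInf_le f i.succ)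
  · refine le_iInf fun i => ?_
    refine Fin.cases inf_le_left (fun j => le_trans inf_le_right (iInf_le _ j)) i

lemma codim_iInf_le (k : ℕ) (f : Fin k → Submodule F V) (h : ∀ i, finrank F (V ⧸ f i) = 1) :
    finrank F (V ⧸ ⨅ i, f i) ≤ k := by
  induction k with
  | zero =>
      rw [iInf_of_empty]
      rw [codim_top]
  | succ k ih =>
      rw [iInf_fin_succ]
      have h1 := codim_inf_le (f 0) (⨅ i : Fin k, f i.succ)
      have h2 : finrank F (V ⧸ ⨅ i : Fin k, f i.succ) ≤ k :=
        ih (fun i => f i.succ) (fun i => h i.succ)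
      have h3 := h 0
      omega

/-- A separating pair of dual vectors. -/
lemma exists_dual_pair {W : Type*} [AddCommGroup W] [Module F W] [FiniteDimensional F W]
    (w₁ w₂ : W) (h1 : w₁ ≠ 0) (h2 : w₂ ≠ 0) :
    ∃ ψ : Module.Dual F W, ψ w₂ = 1 ∧ ψ w₁ ≠ 0 := by
  have sep : ∀ w : W, w ≠ 0 → ∃ φ : Module.Dual F W, φ w ≠ 0 := by
    intro w hw
    by_contra h
    push_neg at h
    exact hw ((Module.forall_dual_apply_eq_zero_iff F w).mp h)
  obtain ⟨φ₂, hφ₂⟩ := sep w₂ h2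
  set ψ₂ : Module.Dual F W := (φ₂ w₂)⁻¹ • φ₂ with hψ₂def
  have hψ₂ : ψ₂ w₂ = 1 := by
    simp [hψ₂def, inv_mul_cancel₀ hφ₂]
  by_cases hc : ψ₂ w₁ ≠ 0
  · exact ⟨ψ₂, hψ₂, hc⟩
  · push_neg at hc
    obtain ⟨ψ₁, hψ₁⟩ := sep w₁ h1
    refine ⟨ψ₂ + (ψ₁ - (ψ₁ w₂) • ψ₂), ?_, ?_⟩
    · simp [hψ₂]
    · simp [hψ₂, hc, hψ₁]

/-- Descent: stripping one reflection off a nonidentity element. -/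
lemma descent (g : V ≃ₗ[F] V) (hg : g ≠ 1) :
    ∃ t : V ≃ₗ[F] V, IsLinRefl t ∧
      finrank F (LinearMap.range (TT (t * g))) + 1
        = finrank F (LinearMap.range (TT g)) := by
  classical
  set K := LinearMap.ker (TT g) with hK
  have hKtop : K ≠ ⊤ := by
    intro h
    apply hg
    have h0 : TT g = 0 := LinearMap.ker_eq_top.mp h
    ext x
    have h2 := LinearMap.ext_iff.mp h0 x
    rw [TT_apply] at h2
    simpa [sub_eq_zero] using h2
  obtain ⟨x₀, hx₀⟩ : ∃ x₀, x₀ ∉ K := by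
    by_contra h
    push_neg at h
    exact hKtop (Submodule.eq_top_iff'.mpr h)
  set x : V := g.symm x₀ with hxdef
  have hgx : g x = x₀ := g.apply_symm_apply x₀
  have hx : x ∉ K := by
    intro h
    have hgxx : g x = x := mem_ker_TT.mp h
    apply hx₀
    rw [← hgx, hgxx]
    exact h
  have hgxK : g x ∉ K := by rw [hgx]; exact hx₀
  have hπx : K.mkQ x ≠ 0 := by
    simpa [Submodule.Quotient.mk_eq_zero] using hx
  have hπgx : K.mkQ (g x) ≠ 0 := by
    simpa [Submodule.Quotient.mk_eq_zero] using hgxK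
  obtain ⟨ψ, hψ1, hψ2⟩ := exists_dual_pair (F := F) (K.mkQ x) (K.mkQ (g x)) hπx hπgx
  set φ : V →ₗ[F] F := ψ ∘ₗ K.mkQ with hφdef
  have hφK : ∀ w ∈ K, φ w = 0 := by
    intro w hw
    simp [hφdef, (Submodule.Quotient.mk_eq_zero K).mpr hw]
  have hφgx : φ (g x) = 1 := hψ1
  set c : F := φ x with hcdef
  have hc : c ≠ 0 := hψ2
  set u : V := x - g x with hudef
  have hu : u ≠ 0 := by
    intro h
    apply hx
    rw [hK, mem_ker_TT]
    exact (sub_eq_zero.mp h).symm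
  have hφu : φ u = c - 1 := by
    rw [hudef, map_sub, hφgx, hcdef]
  set r : V →ₗ[F] V := LinearMap.id + φ.smulRight u with hrdef
  set r' : V →ₗ[F] V := LinearMap.id - c⁻¹ • φ.smulRight u with hr'def
  have hr_apply : ∀ w, r w = w + φ w • u := by
    intro w; simp [hrdef]
  have hr'_apply : ∀ w, r' w = w - c⁻¹ • (φ w • u) := by
    intro w; simp [hr'def]
  have hφr' : ∀ w, φ (r' w) = c⁻¹ * φ w := by
    intro w
    rw [hr'_apply, map_sub, map_smul, map_smul, hφu, smul_eq_mul, smul_eq_mul]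
    field_simp
    ring
  have hφr : ∀ w, φ (r w) = c * φ w := by
    intro w
    rw [hr_apply, map_add, map_smul, hφu, smul_eq_mul]
    ring
  have key1 : r ∘ₗ r' = LinearMap.id := by
    ext w
    simp only [LinearMap.comp_apply, LinearMap.id_apply]
    rw [hr_apply, hφr', hr'_apply]
    module
  have key2 : r' ∘ₗ r = LinearMap.id := by
    ext w
    simp only [LinearMap.comp_apply, LinearMap.id_apply]
    rw [hr'_apply, hφr, hr_apply, mul_smul, inv_smul_smul₀ hc]
    abel
  set t : V ≃ₗ[F] V := LinearEquiv.ofLinear r r' key1 key2 with htdef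
  have ht_apply : ∀ w, t w = w + φ w • u := by
    intro w
    rw [htdef, LinearEquiv.ofLinear_apply, hr_apply]
  have hTT_t : TT t = φ.smulRight u := by
    ext w
    rw [TT_apply, ht_apply]
    simp
  have hrange_t : LinearMap.range (TT t) = Submodule.span F {u} := by
    rw [hTT_t]
    apply le_antisymm
    · rintro _ ⟨w, rfl⟩
      simp only [LinearMap.smulRight_apply]
      exact Submodule.smul_mem _ _ (Submodule.mem_span_singleton_self u)
    · rw [Submodule.span_le, Set.singleton_subset_iff]
      exact ⟨g x, by simp [hφgx]⟩
  have ht_refl : IsLinRefl t := by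
    rw [isLinRefl_iff, hrange_t]
    exact finrank_span_singleton hu
  have hmul_apply : ∀ w, (t * g) w = t (g w) := fun _ => rfl
  have hker_le : K ⊔ Submodule.span F {x} ≤ LinearMap.ker (TT (t * g)) := by
    apply sup_le
    · intro w hw
      rw [mem_ker_TT, hmul_apply, mem_ker_TT.mp hw, ht_apply,
        hφK w hw, zero_smul, add_zero]
    · rw [Submodule.span_le, Set.singleton_subset_iff, SetLike.mem_coe, mem_ker_TT,
        hmul_apply, ht_apply, hφgx, one_smul, hudef]
      abel
  have hlt : K < LinearMap.ker (TT (t * g)) :=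
    lt_of_lt_of_le (SetLike.lt_iff_le_and_exists.mpr ⟨le_sup_left,
      x, Submodule.mem_sup_right (Submodule.mem_span_singleton_self x), hx⟩) hker_le
  have hfr : finrank F K < finrank F (LinearMap.ker (TT (t * g))) :=
    Submodule.finrank_lt_finrank_of_lt hlt
  refine ⟨t, ht_refl, ?_⟩
  have q1 := (LinearMap.ker (TT (t * g))).finrank_quotient_add_finrank
  have q2 := K.finrank_quotient_add_finrank
  have e1 : finrank F (V ⧸ LinearMap.ker (TT (t * g)))
      = finrank F (LinearMap.range (TT (t * g))) := finrank_quot_eq _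
  have e2 : finrank F (V ⧸ K) = finrank F (LinearMap.range (TT g)) := finrank_quot_eq _
  have hlow : finrank F (LinearMap.range (TT g))
      ≤ 1 + finrank F (LinearMap.range (TT (t * g))) := by
    have hgid : g = t⁻¹ * (t * g) := (inv_mul_cancel_left t g).symm
    have b1 : finrank F (LinearMap.range (TT g))
        = finrank F (LinearMap.range (TT (t⁻¹ * (t * g)))) := by rw [← hgid]
    have b2 : finrank F (LinearMap.range (TT (t⁻¹ * (t * g))))
        ≤ finrank F ↥(LinearMap.range (TT t⁻¹) ⊔ LinearMap.range (TT (t * g))) :=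
      Submodule.finrank_mono (range_TT_mul_le _ _)
    have b3 := finrank_sup_le (LinearMap.range (TT t⁻¹)) (LinearMap.range (TT (t * g)))
    have b4 : finrank F (LinearMap.range (TT t⁻¹)) = 1 :=
      (isLinRefl_iff _).mp (isLinRefl_inv ht_refl)
    omega
  omega

/-- Dieudonné: every `g` is a product of `rank (g - 1)` reflections. -/
lemma exists_list : ∀ (m : ℕ) (g : V ≃ₗ[F] V),
    finrank F (LinearMap.range (TT g)) = m →
    ∃ l : List (V ≃ₗ[F] V), (∀ t ∈ l, IsLinRefl t) ∧ l.prod = g ∧ l.length = m := by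
  intro m
  induction m with
  | zero =>
      intro g hm
      have h0 : LinearMap.range (TT g) = ⊥ := Submodule.finrank_eq_zero.mp hm
      have hTT : TT g = 0 := LinearMap.range_eq_bot.mp h0
      have hg1 : g = 1 := by
        ext x
        have h2 := LinearMap.ext_iff.mp hTT x
        rw [TT_apply] at h2
        simpa [sub_eq_zero] using h2
      exact ⟨[], by simp, by simp [hg1], by simp⟩
  | succ m ih =>
      intro g hm
      have hg1 : g ≠ 1 := by
        rintro rfl
        have h0 : finrank F (LinearMap.range (TT (1 : V ≃ₗ[F] V))) = 0 := by
          rw [TT_one, LinearMap.range_zero]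
          exact finrank_bot F V
        omega
      obtain ⟨t, ht, hrk⟩ := descent g hg1
      have hm' : finrank F (LinearMap.range (TT (t * g))) = m := by omega
      obtain ⟨l, hl1, hl2, hl3⟩ := ih (t * g) hm'
      refine ⟨t⁻¹ :: l, ?_, ?_, ?_⟩
      · intro u hu
        rcases List.mem_cons.mp hu with h | h
        · exact h ▸ isLinRefl_inv ht
        · exact hl1 u h
      · rw [List.prod_cons, hl2, inv_mul_cancel_left]
      · simp [hl3]

lemma reflLen_eq (g : V ≃ₗ[F] V) :
    reflLen g = finrank F (LinearMap.range (TT g)) := by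
  obtain ⟨l, h1, h2, h3⟩ := exists_list (finrank F (LinearMap.range (TT g))) g rfl
  have hne : {n : ℕ | ∃ l : List (V ≃ₗ[F] V),
      (∀ s ∈ l, IsLinRefl s) ∧ l.prod = g ∧ l.length = n}.Nonempty :=
    ⟨_, l, h1, h2, h3⟩
  apply le_antisymm
  · exact Nat.sInf_le ⟨l, h1, h2, h3⟩
  · obtain ⟨l', hl1, hl2, hl3⟩ := Nat.sInf_mem hne
    have c1 : finrank F (LinearMap.range (TT g))
        = finrank F (LinearMap.range (TT l'.prod)) := by rw [hl2]
    have c2 := finrank_range_TT_prod_le l' hl1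
    rw [reflLen]
    omega

/-- Lemma C: under independence of hyperplanes and lines, the fixed space of the
product is the intersection of the hyperplanes. -/
lemma lemC : ∀ (k : ℕ) (s : Fin k → (V ≃ₗ[F] V)) (v : Fin k → V),
    (∀ i, IsLinRefl (s i)) →
    (∀ i, LinearMap.range (TT (s i)) = Submodule.span F {v i}) →
    finrank F (V ⧸ ⨅ i, LinearMap.ker (TT (s i))) = k →
    finrank F (Submodule.span F (Set.range v)) = k →
    LinearMap.ker (TT (List.ofFn s).prod) = ⨅ i, LinearMap.ker (TT (s i)) := by
  intro k
  induction k with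
  | zero =>
      intro s v _ _ _ _
      rw [List.ofFn_zero, List.prod_nil, TT_one, LinearMap.ker_zero, iInf_of_empty]
  | succ k ih =>
      intro s v hs hv hK hS
      set s' : Fin k → (V ≃ₗ[F] V) := fun i => s i.succ with hs'def
      set v' : Fin k → V := fun i => v i.succ with hv'def
      set g' : V ≃ₗ[F] V := (List.ofFn s').prod with hg'def
      have hsplit : (⨅ i, LinearMap.ker (TT (s i)))
          = LinearMap.ker (TT (s 0)) ⊓ ⨅ i : Fin k, LinearMap.ker (TT (s' i)) :=
        iInf_fin_succ _
      have hcod0 : finrank F (V ⧸ LinearMap.ker (TT (s 0))) = 1 := hs 0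
      have hcodI_le : finrank F (V ⧸ ⨅ i : Fin k, LinearMap.ker (TT (s' i))) ≤ k :=
        codim_iInf_le k _ (fun i => hs i.succ)
      have hle1 : finrank F (V ⧸ ⨅ i, LinearMap.ker (TT (s i)))
          ≤ finrank F (V ⧸ LinearMap.ker (TT (s 0)))
            + finrank F (V ⧸ ⨅ i : Fin k, LinearMap.ker (TT (s' i))) := by
        rw [hsplit]
        exact codim_inf_le _ _
      have hcodI : finrank F (V ⧸ ⨅ i : Fin k, LinearMap.ker (TT (s' i))) = k := by omega
      set S' : Submodule F V := Submodule.span F (Set.range v') with hS'def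
      have hrange : Set.range v = insert (v 0) (Set.range v') := Fin.range_fin_succ v
      have hspan : Submodule.span F (Set.range v) = Submodule.span F {v 0} ⊔ S' := by
        rw [hrange, Set.insert_eq, Submodule.span_union]
      have hdim0 : finrank F (Submodule.span F ({v 0} : Set V)) ≤ 1 := by
        by_cases h0 : v 0 = 0
        · rw [h0, Submodule.span_zero_singleton, finrank_bot F V]
          exact Nat.zero_le 1
        · rw [finrank_span_singleton h0]
      have hdimS'_le : finrank F S' ≤ k := by
        have := finrank_range_le_card (R := F) v'
        simpa [Set.finrank] using this
      rw [hspan] at hS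
      have hsup := finrank_sup_le (Submodule.span F ({v 0} : Set V)) S'
      have hdimS' : finrank F S' = k := by omega
      have hdim0' : finrank F (Submodule.span F ({v 0} : Set V)) = 1 := by omega
      have hinf : Submodule.span F ({v 0} : Set V) ⊓ S' = ⊥ := by
        have hie := Submodule.finrank_sup_add_finrank_inf_eq
          (Submodule.span F ({v 0} : Set V)) S'
        have h0 : finrank F ↥(Submodule.span F ({v 0} : Set V) ⊓ S') = 0 := by omega
        exact Submodule.finrank_eq_zero.mp h0
      have hIH : LinearMap.ker (TT g') = ⨅ i : Fin k, LinearMap.ker (TT (s' i)) :=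
        ih s' v' (fun i => hs i.succ) (fun i => hv i.succ) hcodI hdimS'
      have hrank_g' : finrank F (LinearMap.range (TT g')) = k := by
        rw [← finrank_quot_eq, hIH]
        exact hcodI
      have hrange_g'_le : LinearMap.range (TT g') ≤ S' := by
        apply range_TT_prod_le
        intro t ht
        obtain ⟨i, rfl⟩ := List.mem_ofFn.mp ht
        rw [hs'def]
        rw [hv i.succ]
        exact Submodule.span_mono (Set.singleton_subset_iff.mpr ⟨i, rfl⟩)
      have hrange_g' : LinearMap.range (TT g') = S' :=
        Submodule.eq_of_le_of_finrank_le hrange_g'_le (by rw [hrank_g', hdimS'])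
      have hprod : (List.ofFn s).prod = s 0 * g' := by
        rw [hg'def, hs'def, List.ofFn_succ, List.prod_cons]
      apply le_antisymm
      · intro x hx
        rw [hprod] at hx
        have hxx : s 0 (g' x) = x := mem_ker_TT.mp hx
        set y : V := g' x - x with hy
        have hy1 : y ∈ S' := by
          rw [← hrange_g']
          exact ⟨x, rfl⟩
        have hy2 : x - g' x ∈ Submodule.span F ({v 0} : Set V) := by
          rw [← hv 0]
          exact ⟨g' x, by rw [TT_apply, hxx]⟩
        have hy0 : y = 0 := by
          have hmem : y ∈ Submodule.span F ({v 0} : Set V) ⊓ S' := by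
            refine Submodule.mem_inf.mpr ⟨?_, hy1⟩
            have hneg := neg_mem hy2
            rw [neg_sub] at hneg
            exact hneg
          rw [hinf] at hmem
          simpa using hmem
        have hgx' : g' x = x := sub_eq_zero.mp (hy ▸ hy0)
        refine (Submodule.mem_iInf _).mpr ?_
        intro i
        refine Fin.cases ?_ (fun j => ?_) i
        · refine mem_ker_TT.mpr ?_
          rw [hgx'] at hxx
          exact hxx
        · have hxI : x ∈ ⨅ i : Fin k, LinearMap.ker (TT (s' i)) := by
            rw [← hIH]
            exact mem_ker_TT.mpr hgx'
          exact (Submodule.mem_iInf _).mp hxI j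
      · apply ker_TT_prod_le
        intro t ht
        obtain ⟨i, rfl⟩ := List.mem_ofFn.mp ht
        exact iInf_le _ i

end Stmt5Aux

theorem stmt5 {F V : Type*} [Field F] [AddCommGroup V] [Module F V] [FiniteDimensional F V]
    (k : ℕ) (s : Fin k → (V ≃ₗ[F] V)) (hs : ∀ i, IsLinRefl (s i))
    (v : Fin k → V)
    (hv : ∀ i, LinearMap.range ((s i : V →ₗ[F] V) - 1) = Submodule.span F {v i})
    (g : V ≃ₗ[F] V) (hg : g = (List.ofFn s).prod) :
    reflLen g = k ↔
      (Module.finrank F (V ⧸ ⨅ i, LinearMap.ker ((s i : V →ₗ[F] V) - 1)) = k ∧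
        Module.finrank F (Submodule.span F (Set.range v)) = k) := by
  show reflLen g = k ↔
      (finrank F (V ⧸ ⨅ i, LinearMap.ker (Stmt5Aux.TT (s i))) = k ∧
        finrank F (Submodule.span F (Set.range v)) = k)
  have hv' : ∀ i, LinearMap.range (Stmt5Aux.TT (s i)) = Submodule.span F {v i} := hv
  have hrl : reflLen g = finrank F (LinearMap.range (Stmt5Aux.TT g)) := Stmt5Aux.reflLen_eq g
  set m := finrank F (LinearMap.range (Stmt5Aux.TT g)) with hm
  have hkle : (⨅ i, LinearMap.ker (Stmt5Aux.TT (s i))) ≤ LinearMap.ker (Stmt5Aux.TT g) := by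
    rw [hg]
    apply Stmt5Aux.ker_TT_prod_le
    intro t ht
    obtain ⟨i, rfl⟩ := List.mem_ofFn.mp ht
    exact iInf_le _ i
  have h1 : m ≤ finrank F (V ⧸ ⨅ i, LinearMap.ker (Stmt5Aux.TT (s i))) := by
    rw [hm, ← Stmt5Aux.finrank_quot_eq]
    exact Stmt5Aux.codim_antitone hkle
  have h2 : finrank F (V ⧸ ⨅ i, LinearMap.ker (Stmt5Aux.TT (s i))) ≤ k :=
    Stmt5Aux.codim_iInf_le k _ (fun i => hs i)
  have h3 : m ≤ finrank F (Submodule.span F (Set.range v)) := by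
    rw [hm]
    apply Submodule.finrank_mono
    rw [hg]
    apply Stmt5Aux.range_TT_prod_le
    intro t ht
    obtain ⟨i, rfl⟩ := List.mem_ofFn.mp ht
    rw [hv' i]
    exact Submodule.span_mono (Set.singleton_subset_iff.mpr ⟨i, rfl⟩)
  have h4 : finrank F (Submodule.span F (Set.range v)) ≤ k := by
    have := finrank_range_le_card (R := F) v
    simpa [Set.finrank] using this
  constructor
  · intro hk
    rw [hrl] at hk
    constructor <;> omega
  · rintro ⟨hc, hd⟩
    have hker := Stmt5Aux.lemC k s v hs hv' hc hd
    have hkg : LinearMap.ker (Stmt5Aux.TT g) = ⨅ i, LinearMap.ker (Stmt5Aux.TT (s i)) := by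
      rw [hg]; exact hker
    have hmk : m = k := by
      rw [hm, ← Stmt5Aux.finrank_quot_eq, hkg]; exact hc
    rw [hrl, hmk]
end

section
/- For every element g of GL(V), where V is a finite-dimensional vector space, the reflection length of g (the minimal length of a factorization of g into reflections) equals dim im(g − 1) = codim ker(g − 1). -/
open Module

section Aux

variable {F V : Type*} [Field F] [AddCommGroup V] [Module F V]

/-- `ν g = dim im (g - 1)`. -/
noncomputable def nuRefl (g : V ≃ₗ[F] V) : ℕ :=
  Module.finrank F (LinearMap.range ((g : V →ₗ[F] V) - 1))

lemma rank_eq_corank {W : Type*} [AddCommGroup W] [Module F W] [FiniteDimensional F V]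
    (f : V →ₗ[F] W) :
    Module.finrank F (LinearMap.range f) = Module.finrank F (V ⧸ LinearMap.ker f) := by
  have h1 := LinearMap.finrank_range_add_finrank_ker f
  have h2 := Submodule.finrank_quotient_add_finrank (LinearMap.ker f)
  omega

lemma nuRefl_one : nuRefl (1 : V ≃ₗ[F] V) = 0 := by
  unfold nuRefl
  have h : (((1 : V ≃ₗ[F] V) : V →ₗ[F] V) - 1) = 0 := by
    ext x; simp
  rw [h, LinearMap.range_zero, finrank_bot]

lemma nuRefl_mul_le [FiniteDimensional F V] (g h : V ≃ₗ[F] V) :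
    nuRefl (g * h) ≤ nuRefl g + nuRefl h := by
  have key : LinearMap.range (((g * h : V ≃ₗ[F] V) : V →ₗ[F] V) - 1) ≤
      LinearMap.range ((g : V →ₗ[F] V) - 1) ⊔ LinearMap.range ((h : V →ₗ[F] V) - 1) := by
    rintro _ ⟨x, rfl⟩
    have hx : (((g * h : V ≃ₗ[F] V) : V →ₗ[F] V) - 1) x =
        ((g : V →ₗ[F] V) - 1) (h x) + ((h : V →ₗ[F] V) - 1) x := by
      simp only [LinearMap.sub_apply, Module.End.one_apply, LinearEquiv.coe_coe]
      rw [show (g * h) x = g (h x) from rfl]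
      abel
    rw [hx]
    exact Submodule.add_mem_sup ⟨h x, rfl⟩ ⟨x, rfl⟩
  calc nuRefl (g * h) ≤ Module.finrank F
        ↥(LinearMap.range ((g : V →ₗ[F] V) - 1) ⊔ LinearMap.range ((h : V →ₗ[F] V) - 1)) :=
        Submodule.finrank_mono key
    _ ≤ nuRefl g + nuRefl h := by
        have := Submodule.finrank_sup_add_finrank_inf_eq
          (LinearMap.range ((g : V →ₗ[F] V) - 1)) (LinearMap.range ((h : V →ₗ[F] V) - 1))
        unfold nuRefl
        omega

lemma nuRefl_of_isLinRefl [FiniteDimensional F V] {s : V ≃ₗ[F] V} (hs : IsLinRefl s) :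
    nuRefl s = 1 := by
  unfold nuRefl
  rw [rank_eq_corank]
  exact hs

lemma isLinRefl_inv [FiniteDimensional F V] {s : V ≃ₗ[F] V} (hs : IsLinRefl s) :
    IsLinRefl s⁻¹ := by
  have hker : LinearMap.ker (((s⁻¹ : V ≃ₗ[F] V) : V →ₗ[F] V) - 1) =
      LinearMap.ker ((s : V →ₗ[F] V) - 1) := by
    ext x
    simp only [LinearMap.mem_ker, LinearMap.sub_apply, Module.End.one_apply, sub_eq_zero,
      LinearEquiv.coe_coe]
    have hinv : (s⁻¹ : V ≃ₗ[F] V) = s.symm := rfl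
    rw [hinv]
    constructor
    · intro hx
      have h2 : s x = s (s.symm x) := (congrArg s hx).symm
      simpa using h2
    · intro hx
      have h2 : s.symm x = s.symm (s x) := (congrArg s.symm hx).symm
      simpa using h2
  unfold IsLinRefl
  rw [hker]
  exact hs

lemma nuRefl_eq [FiniteDimensional F V] (g : V ≃ₗ[F] V) :
    nuRefl g = Module.finrank F V - Module.finrank F (LinearMap.ker ((g : V →ₗ[F] V) - 1)) ∧
      Module.finrank F (LinearMap.ker ((g : V →ₗ[F] V) - 1)) ≤ Module.finrank F V := by
  have h1 := LinearMap.finrank_range_add_finrank_ker ((g : V →ₗ[F] V) - 1)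
  constructor
  · unfold nuRefl; omega
  · omega

/-- The descent step: any `g ≠ 1` admits a reflection `s` with `ν (s*g) < ν g`. -/
lemma descent [FiniteDimensional F V] (g : V ≃ₗ[F] V) (hg : g ≠ 1) :
    ∃ s : V ≃ₗ[F] V, IsLinRefl s ∧ nuRefl (s * g) < nuRefl g := by
  classical
  set K := LinearMap.ker ((g : V →ₗ[F] V) - 1) with hK
  have memK : ∀ x, x ∈ K ↔ g x = x := by
    intro x
    simp [hK, LinearMap.mem_ker, sub_eq_zero]
  -- find v with g v ∉ K
  have hex : ∃ v : V, g v ∉ K := by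
    by_contra hall
    push_neg at hall
    apply hg
    ext w
    have := hall (g.symm w)
    rw [memK] at this
    simpa using this
  obtain ⟨v, hgv⟩ := hex
  have hv : v ∉ K := by
    intro hvK
    have h1 : g v = v := (memK v).1 hvK
    have h2 : g v ∈ K := by rw [h1]; exact hvK
    exact hgv h2
  set a : V := g v - v with ha_def
  have ha : a ≠ 0 := by
    intro h0
    have : g v = v := by
      have := sub_eq_zero.mp h0
      exact this
    exact hv ((memK v).2 this)
  -- dual functional on the quotient
  set π := K.mkQ with hπ
  have hπgv : π (g v) ≠ 0 := by
    simpa [hπ, Submodule.Quotient.mk_eq_zero] using hgv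
  have hπv : π v ≠ 0 := by
    simpa [hπ, Submodule.Quotient.mk_eq_zero] using hv
  obtain ⟨ψ₁, hψ₁⟩ : ∃ ψ : Module.Dual F (V ⧸ K), ψ (π (g v)) = 1 := by
    have := (Module.forall_dual_apply_eq_zero_iff F (π (g v))).not.mpr hπgv
    push_neg at this
    obtain ⟨ψ, hψ⟩ := this
    exact ⟨(ψ (π (g v)))⁻¹ • ψ, by simp [inv_mul_cancel₀ hψ]⟩
  obtain ⟨ψ₂, hψ₂⟩ : ∃ ψ : Module.Dual F (V ⧸ K), ψ (π v) = 1 := by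
    have := (Module.forall_dual_apply_eq_zero_iff F (π v)).not.mpr hπv
    push_neg at this
    obtain ⟨ψ, hψ⟩ := this
    exact ⟨(ψ (π v))⁻¹ • ψ, by simp [inv_mul_cancel₀ hψ]⟩
  obtain ⟨ψ, hψw, hψv⟩ : ∃ ψ : Module.Dual F (V ⧸ K), ψ (π (g v)) = 1 ∧ ψ (π v) ≠ 0 := by
    by_cases h1 : ψ₁ (π v) ≠ 0
    · exact ⟨ψ₁, hψ₁, h1⟩
    · push_neg at h1
      by_cases h2 : ψ₂ (π (g v)) = 0
      · exact ⟨ψ₁ + ψ₂, by simp [hψ₁, h2], by simp [h1, hψ₂]⟩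
      · refine ⟨(ψ₂ (π (g v)))⁻¹ • ψ₂, by simp [inv_mul_cancel₀ h2], ?_⟩
        simp only [LinearMap.smul_apply, smul_eq_mul, hψ₂, mul_one]
        exact inv_ne_zero h2
  set φ : V →ₗ[F] F := ψ ∘ₗ π with hφ_def
  have hφK : ∀ x ∈ K, φ x = 0 := by
    intro x hx
    have : π x = 0 := by simpa [hπ, Submodule.Quotient.mk_eq_zero] using hx
    simp [hφ_def, this]
  have hφgv : φ (g v) = 1 := hψw
  have hφv : φ v ≠ 0 := hψv
  have hφa : φ a = 1 - φ v := by
    have h1 : φ a = φ (g v) - φ v := by rw [ha_def, map_sub]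
    rw [h1, hφgv]
  -- the reflection s : x ↦ x - φ x • a
  set c : F := (φ v)⁻¹ with hc
  set f : V →ₗ[F] V := LinearMap.id - φ.smulRight a with hf
  set f' : V →ₗ[F] V := LinearMap.id + (c • φ).smulRight a with hf'
  have hfapp : ∀ x, f x = x - φ x • a := fun x => rfl
  have hf'app : ∀ x, f' x = x + (c * φ x) • a := fun x => rfl
  have key1 : ∀ x, f (f' x) = x := by
    intro x
    rw [hf'app, hfapp]
    have hφfx : φ (x + (c * φ x) • a) = φ x + c * φ x * φ a := by
      rw [map_add, map_smul, smul_eq_mul]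
    rw [hφfx]
    have hcv : c * φ v = 1 := inv_mul_cancel₀ hφv
    have hz : (c * φ x) • a - (φ x + c * φ x * φ a) • a = 0 := by
      rw [← sub_smul]
      have h0 : c * φ x - (φ x + c * φ x * φ a) = 0 := by
        rw [hφa]
        have h1 : c * φ x - (φ x + c * φ x * (1 - φ v)) = φ x * (c * φ v) - φ x := by ring
        rw [h1, hcv]; ring
      rw [h0, zero_smul]
    calc x + (c * φ x) • a - (φ x + c * φ x * φ a) • a
        = x + ((c * φ x) • a - (φ x + c * φ x * φ a) • a) := by abel
      _ = x := by rw [hz, add_zero]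
  have key2 : ∀ x, f' (f x) = x := by
    intro x
    rw [hfapp, hf'app]
    have hφfx : φ (x - φ x • a) = φ x * φ v := by
      rw [map_sub, map_smul, smul_eq_mul, hφa]; ring
    rw [hφfx]
    have hcv : c * φ v = 1 := inv_mul_cancel₀ hφv
    have h2 : c * (φ x * φ v) = φ x := by
      rw [show c * (φ x * φ v) = φ x * (c * φ v) by ring, hcv, mul_one]
    rw [h2]
    abel
  set s : V ≃ₗ[F] V := LinearEquiv.ofLinear f f'
    (by ext x; exact key1 x) (by ext x; exact key2 x) with hs_def
  have hscoe : (s : V →ₗ[F] V) = f := rfl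
  have hsapp : ∀ x, s x = x - φ x • a := fun x => rfl
  -- s is a reflection
  have hkerφ : LinearMap.ker ((s : V →ₗ[F] V) - 1) = LinearMap.ker φ := by
    ext x
    simp only [LinearMap.mem_ker, LinearMap.sub_apply, Module.End.one_apply]
    rw [hscoe, hfapp]
    constructor
    · intro hx
      have : φ x • a = 0 := by
        have : x - φ x • a - x = -(φ x • a) := by abel
        rw [this] at hx
        exact neg_eq_zero.mp hx
      rcases smul_eq_zero.mp this with h | h
      · exact h
      · exact absurd h ha
    · intro hx
      rw [hx, zero_smul, sub_zero, sub_self]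
  have hrefl : IsLinRefl s := by
    unfold IsLinRefl
    rw [hkerφ, ← rank_eq_corank]
    have : LinearMap.range φ = ⊤ := by
      rw [LinearMap.range_eq_top]
      intro t
      exact ⟨t • (g v), by rw [map_smul, hφgv, smul_eq_mul, mul_one]⟩
    rw [this]
    simp
  refine ⟨s, hrefl, ?_⟩
  -- fixed space of s * g grows
  set K' := LinearMap.ker (((s * g : V ≃ₗ[F] V) : V →ₗ[F] V) - 1) with hK'
  have memK' : ∀ x, x ∈ K' ↔ s (g x) = x := by
    intro x
    simp [hK', LinearMap.mem_ker, sub_eq_zero]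
  have hKle : K < K' := by
    rw [SetLike.lt_iff_le_and_exists]
    constructor
    · intro x hx
      rw [memK']
      rw [(memK x).1 hx, hsapp, hφK x hx, zero_smul, sub_zero]
    · refine ⟨v, ?_, hv⟩
      rw [memK', hsapp, hφgv, one_smul, ha_def]
      abel
  have hlt := Submodule.finrank_lt_finrank_of_lt hKle
  obtain ⟨e1, e2⟩ := nuRefl_eq (s * g)
  obtain ⟨e3, e4⟩ := nuRefl_eq g
  rw [← hK'] at e1 e2
  rw [← hK] at e3 e4
  omega

lemma exists_refl_list [FiniteDimensional F V] (g : V ≃ₗ[F] V) :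
    ∃ l : List (V ≃ₗ[F] V), (∀ s ∈ l, IsLinRefl s) ∧ l.prod = g ∧ l.length = nuRefl g := by
  suffices H : ∀ n : ℕ, ∀ g : V ≃ₗ[F] V, nuRefl g = n →
      ∃ l : List (V ≃ₗ[F] V), (∀ s ∈ l, IsLinRefl s) ∧ l.prod = g ∧ l.length = nuRefl g from
    H (nuRefl g) g rfl
  intro n
  induction n using Nat.strong_induction_on with
  | _ n ih =>
    intro g hn
    by_cases hg : g = 1
    · exact ⟨[], by simp, by simp [hg], by simp [hg, nuRefl_one]⟩
    · obtain ⟨s, hs, hlt⟩ := descent g hg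
      obtain ⟨l, hl, hprod, hlen⟩ := ih (nuRefl (s * g)) (hn ▸ hlt) (s * g) rfl
      have hsub : nuRefl g ≤ 1 + nuRefl (s * g) := by
        have := nuRefl_mul_le s⁻¹ (s * g)
        rw [inv_mul_cancel_left] at this
        rwa [nuRefl_of_isLinRefl (isLinRefl_inv hs)] at this
      refine ⟨s⁻¹ :: l, ?_, ?_, ?_⟩
      · intro t ht
        rcases List.mem_cons.mp ht with h | h
        · rw [h]; exact isLinRefl_inv hs
        · exact hl t h
      · rw [List.prod_cons, hprod, inv_mul_cancel_left]
      · rw [List.length_cons, hlen]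
        omega

lemma nuRefl_list_le [FiniteDimensional F V] (l : List (V ≃ₗ[F] V))
    (hl : ∀ s ∈ l, IsLinRefl s) : nuRefl l.prod ≤ l.length := by
  induction l with
  | nil => simp [nuRefl_one]
  | cons s l ih =>
    rw [List.prod_cons, List.length_cons]
    calc nuRefl (s * l.prod) ≤ nuRefl s + nuRefl l.prod := nuRefl_mul_le _ _
      _ ≤ 1 + l.length := by
          rw [nuRefl_of_isLinRefl (hl s List.mem_cons_self)]
          exact Nat.add_le_add_left (ih fun t ht => hl t (List.mem_cons_of_mem s ht)) 1
      _ = l.length + 1 := by omega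

end Aux

theorem stmt6 {F V : Type*} [Field F] [AddCommGroup V] [Module F V] [FiniteDimensional F V]
    (g : V ≃ₗ[F] V) :
    reflLen g = Module.finrank F (LinearMap.range ((g : V →ₗ[F] V) - 1)) ∧
      Module.finrank F (LinearMap.range ((g : V →ₗ[F] V) - 1)) =
        Module.finrank F (V ⧸ LinearMap.ker ((g : V →ₗ[F] V) - 1)) := by
  constructor
  · show reflLen g = nuRefl g
    obtain ⟨l, hl, hprod, hlen⟩ := exists_refl_list g
    have hmem : nuRefl g ∈ {n : ℕ | ∃ l : List (V ≃ₗ[F] V),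
        (∀ s ∈ l, IsLinRefl s) ∧ l.prod = g ∧ l.length = n} := ⟨l, hl, hprod, hlen⟩
    apply le_antisymm
    · exact Nat.sInf_le hmem
    · have hmem' := Nat.sInf_mem ⟨nuRefl g, hmem⟩
      obtain ⟨l', hl', hprod', hlen'⟩ := hmem'
      calc nuRefl g = nuRefl l'.prod := by rw [hprod']
        _ ≤ l'.length := nuRefl_list_le l' hl'
        _ = reflLen g := hlen'
  · exact rank_eq_corank _
end

section
/- If Ṽ is a finite-dimensional affine space over a field F and dim Ṽ ≥ 2 (or |F| > 2 and dim Ṽ ≥ 1), then the general affine group GA(Ṽ) is generated by its subset of reflections. -/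
open Module Pointwise

/-- The moved space of an affine transformation. -/
def mov {F V P : Type*} [Field F] [AddCommGroup V] [Module F V] [AddTorsor V P]
    (g : P ≃ᵃ[F] P) : Set V :=
  Set.range fun x => g x -ᵥ x

/-- A reflection in the general affine group: an invertible affine transformation
whose fixed-point set is an affine hyperplane. -/
def IsAffRefl {F V P : Type*} [Field F] [AddCommGroup V] [Module F V] [AddTorsor V P]
    (r : P ≃ᵃ[F] P) : Prop :=
  ∃ H : AffineSubspace F P, (H : Set P) = {x | r x = x} ∧
    Module.finrank F (V ⧸ H.direction) = 1

/-- Reflection length in the general affine group (`⊤` if no factorization exists). -/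
noncomputable def reflLenA {F V P : Type*} [Field F] [AddCommGroup V] [Module F V]
    [AddTorsor V P] (g : P ≃ᵃ[F] P) : ℕ∞ :=
  sInf {n : ℕ∞ | ∃ l : List (P ≃ᵃ[F] P),
    (∀ r ∈ l, IsAffRefl r) ∧ l.prod = g ∧ (l.length : ℕ∞) = n}

/-- The dimension of the moved space (an affine subspace of `V`). -/
noncomputable def movDim {F V P : Type*} [Field F] [AddCommGroup V] [Module F V]
    [AddTorsor V P] (g : P ≃ᵃ[F] P) : ℕ :=
  Module.finrank F (vectorSpan F (mov g))

section Aux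

variable {F V P : Type*} [Field F] [AddCommGroup V] [Module F V] [AddTorsor V P]

lemma auxQ (φ : V →ₗ[F] F) (hφ : Function.Surjective φ) :
    finrank F (V ⧸ LinearMap.ker φ) = 1 := by
  rw [LinearEquiv.finrank_eq (φ.quotKerEquivOfSurjective hφ), finrank_self]

lemma auxMax (φ : V →ₗ[F] F) (hφ : Function.Surjective φ) (U : Submodule F V)
    (hle : LinearMap.ker φ ≤ U) (hne : U ≠ ⊤) : U = LinearMap.ker φ := by
  by_contra hUk
  apply hne
  obtain ⟨x, hxU, hxk⟩ : ∃ x ∈ U, x ∉ LinearMap.ker φ := by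
    by_contra hc
    push_neg at hc
    exact hUk (le_antisymm hc hle)
  rw [LinearMap.mem_ker] at hxk
  rw [Submodule.eq_top_iff']
  intro v
  have h1 : v - (φ v / φ x) • x ∈ LinearMap.ker φ := by
    simp [LinearMap.mem_ker, div_mul_cancel₀ _ hxk]
  have := U.add_mem (hle h1) (U.smul_mem (φ v / φ x) hxU)
  simpa using this

/-- Conjugation of a linear automorphism into the affine group at base point `p`. -/
def PhiAff (p : P) : (V ≃ₗ[F] V) →* (P ≃ᵃ[F] P) where
  toFun e := ((AffineEquiv.vaddConst F p).symm.trans e.toAffineEquiv).trans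
    (AffineEquiv.vaddConst F p)
  map_one' := by
    ext x
    simp [AffineEquiv.one_def]
  map_mul' e e' := by
    ext x
    show (e * e') (x -ᵥ p) +ᵥ p = _
    show _ = e ((e' (x -ᵥ p) +ᵥ p) -ᵥ p) +ᵥ p
    simp only [vadd_vsub]
    rfl

lemma PhiAff_apply (p : P) (e : V ≃ₗ[F] V) (x : P) : PhiAff p e x = e (x -ᵥ p) +ᵥ p := rfl

/-- If a (nontrivial) linear automorphism fixes the kernel of a surjective functional
pointwise, its conjugate at any base point is in the subgroup generated by reflections. -/
lemma phi_mem (p : P) {e : V ≃ₗ[F] V} (φ : V →ₗ[F] F) (hs : Function.Surjective φ)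
    (hfix : ∀ w ∈ LinearMap.ker φ, e w = w) :
    PhiAff p e ∈ Subgroup.closure {r : P ≃ᵃ[F] P | IsAffRefl r} := by
  by_cases h1 : e = 1
  · rw [h1, map_one]; exact Subgroup.one_mem _
  · apply Subgroup.subset_closure
    set U : Submodule F V := LinearMap.ker ((e : V →ₗ[F] V) - LinearMap.id) with hU
    have hUmem : ∀ v : V, v ∈ U ↔ e v = v := by
      intro v
      simp [hU, LinearMap.mem_ker, sub_eq_zero, LinearMap.sub_apply]
    have hUeq : U = LinearMap.ker φ := by
      apply auxMax φ hs U
      · intro w hw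
        rw [hUmem]
        exact hfix w hw
      · intro ht
        apply h1
        ext v
        exact (hUmem v).1 (ht ▸ Submodule.mem_top)
    refine ⟨AffineSubspace.mk' p (LinearMap.ker φ), ?_, ?_⟩
    · ext x
      rw [AffineSubspace.mem_coe, AffineSubspace.mem_mk', ← hUeq, hUmem]
      constructor
      · intro hx
        show PhiAff p e x = x
        rw [PhiAff_apply, hx, vsub_vadd]
      · intro hx
        have : e (x -ᵥ p) +ᵥ p = x := hx
        have := congrArg (· -ᵥ p) this
        simpa using this
    · rw [AffineSubspace.direction_mk']
      exact auxQ φ hs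

end Aux

section Shear

variable {F V P : Type*} [Field F] [AddCommGroup V] [Module F V] [AddTorsor V P]

/-- The linear shear `v ↦ v + φ v • w`, for `φ w = 0`. -/
def linShear (φ : V →ₗ[F] F) (w : V) (hw : φ w = 0) : V ≃ₗ[F] V where
  toFun v := v + φ v • w
  invFun v := v - φ v • w
  map_add' u v := by simp [add_smul]; abel
  map_smul' c v := by simp [smul_smul, smul_add]
  left_inv v := by simp [hw]
  right_inv v := by simp [hw]

/-- The affine shear `x ↦ (φ (x -ᵥ p) + c) • w +ᵥ x`. -/
def shear (p : P) (φ : V →ₗ[F] F) (w : V) (hw : φ w = 0) (c : F) : P ≃ᵃ[F] P where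
  toFun x := (φ (x -ᵥ p) + c) • w +ᵥ x
  invFun x := -((φ (x -ᵥ p) + c) • w) +ᵥ x
  left_inv x := by
    beta_reduce
    have h1 : (((φ (x -ᵥ p) + c) • w +ᵥ x : P) -ᵥ p) = (φ (x -ᵥ p) + c) • w + (x -ᵥ p) :=
      vadd_vsub_assoc _ _ _
    rw [h1]
    simp [hw, vadd_vadd]
  right_inv x := by
    beta_reduce
    have h1 : ((-((φ (x -ᵥ p) + c) • w) +ᵥ x : P) -ᵥ p) = -((φ (x -ᵥ p) + c) • w) + (x -ᵥ p) :=
      vadd_vsub_assoc _ _ _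
    rw [h1]
    simp [hw, vadd_vadd]
  linear := linShear φ w hw
  map_vadd' x v := by
    beta_reduce
    have h1 : (((v +ᵥ x : P)) -ᵥ p) = v + (x -ᵥ p) := vadd_vsub_assoc _ _ _
    show (φ ((v +ᵥ x : P) -ᵥ p) + c) • w +ᵥ (v +ᵥ x) = (v + φ v • w) +ᵥ ((φ (x -ᵥ p) + c) • w +ᵥ x)
    rw [h1, vadd_vadd, vadd_vadd]
    congr 1
    simp [add_smul]
    abel

lemma shear_apply (p : P) (φ : V →ₗ[F] F) (w : V) (hw : φ w = 0) (c : F) (x : P) :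
    shear p φ w hw c x = (φ (x -ᵥ p) + c) • w +ᵥ x := rfl

lemma shear_isAffRefl (p : P) (φ : V →ₗ[F] F) (w : V) (hw : φ w = 0) (c : F)
    (hs : Function.Surjective φ) (hw0 : w ≠ 0) : IsAffRefl (shear p φ w hw c) := by
  obtain ⟨u, hu⟩ := hs 1
  refine ⟨AffineSubspace.mk' ((-c) • u +ᵥ p) (LinearMap.ker φ), ?_, ?_⟩
  · ext x
    rw [AffineSubspace.mem_coe, AffineSubspace.mem_mk']
    have h1 : x -ᵥ ((-c) • u +ᵥ p) = (x -ᵥ p) - (-c) • u := by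
      rw [vsub_vadd_eq_vsub_sub]
    rw [LinearMap.mem_ker, h1]
    have h2 : φ ((x -ᵥ p) - (-c) • u) = φ (x -ᵥ p) + c := by
      simp [hu]
    rw [h2]
    constructor
    · intro hx
      show (φ (x -ᵥ p) + c) • w +ᵥ x = x
      rw [hx, zero_smul, zero_vadd]
    · intro hx
      have : (φ (x -ᵥ p) + c) • w +ᵥ x = x := hx
      have h3 : (φ (x -ᵥ p) + c) • w = 0 := by
        have := congrArg (· -ᵥ x) this
        simpa using this
      rcases smul_eq_zero.1 h3 with h | h
      · exact h
      · exact absurd h hw0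
  · rw [AffineSubspace.direction_mk']
    exact auxQ φ hs

/-- Translations lie in the reflection subgroup when `finrank ≥ 2`. -/
lemma constVAdd_mem_of_two [FiniteDimensional F V] (h2 : 2 ≤ finrank F V) (p : P) (v : V) :
    AffineEquiv.constVAdd F P v ∈ Subgroup.closure {r : P ≃ᵃ[F] P | IsAffRefl r} := by
  rcases eq_or_ne v 0 with rfl | hv
  · rw [AffineEquiv.constVAdd_zero]
    exact Subgroup.one_mem _
  -- construct a surjective functional vanishing on v
  obtain ⟨φ, hs, hφv⟩ : ∃ φ : V →ₗ[F] F, Function.Surjective φ ∧ φ v = 0 := by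
    set K : Submodule F V := Submodule.span F {v} with hK
    have hq : 1 ≤ finrank F (V ⧸ K) := by
      have h3 := Submodule.finrank_quotient_add_finrank K
      have h4 : finrank F K ≤ 1 := by
        rw [hK, finrank_span_singleton hv]
      omega
    set b : Basis (Fin (finrank F (V ⧸ K))) F (V ⧸ K) := finBasis F (V ⧸ K)
    set ψ : (V ⧸ K) →ₗ[F] F := b.coord ⟨0, hq⟩
    have hψ : Function.Surjective ψ := by
      intro y
      refine ⟨y • b ⟨0, hq⟩, ?_⟩
      simp [ψ]
    refine ⟨ψ.comp K.mkQ, hψ.comp K.mkQ_surjective, ?_⟩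
    have : K.mkQ v = 0 := by
      rw [Submodule.mkQ_apply, Submodule.Quotient.mk_eq_zero]
      exact Submodule.mem_span_singleton_self v
    simp [this]
  have hφv' : (-φ) v = 0 := by simp [hφv]
  have hs' : Function.Surjective (-φ : V →ₗ[F] F) := by
    intro y
    obtain ⟨x, hx⟩ := hs (-y)
    exact ⟨x, by simp [hx]⟩
  have key : AffineEquiv.constVAdd F P v
      = shear p (-φ) v hφv' 1 * shear p φ v hφv 0 := by
    ext x
    show v +ᵥ x = shear p (-φ) v hφv' 1 (shear p φ v hφv 0 x)
    rw [shear_apply, shear_apply, vadd_vsub_assoc]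
    simp only [LinearMap.neg_apply, map_add, map_smul, hφv, smul_eq_mul, mul_zero, add_zero,
      smul_zero]
    rw [vadd_vadd]
    congr 1
    module
  rw [key]
  exact Subgroup.mul_mem _
    (Subgroup.subset_closure (shear_isAffRefl p (-φ) v hφv' 1 hs' hv))
    (Subgroup.subset_closure (shear_isAffRefl p φ v hφv 0 hs hv))

end Shear

section Homothety

variable {F V P : Type*} [Field F] [AddCommGroup V] [Module F V] [AddTorsor V P]

/-- Scalar multiplication by a nonzero scalar as a linear automorphism. -/
def scalarEquiv (c : F) (hc : c ≠ 0) : V ≃ₗ[F] V where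
  toFun v := c • v
  invFun v := c⁻¹ • v
  map_add' := smul_add c
  map_smul' a v := smul_comm c a v
  left_inv v := by simp [smul_smul, inv_mul_cancel₀ hc]
  right_inv v := by simp [smul_smul, mul_inv_cancel₀ hc]

lemma exists_ne_zero_ne_one (hF : 2 < Nat.card F) : ∃ c : F, c ≠ 0 ∧ c ≠ 1 := by
  by_contra h
  push_neg at h
  have hsurj : Function.Surjective (fun b : Bool => if b then (1 : F) else 0) := by
    intro c
    by_cases hc : c = 0
    · exact ⟨false, by simp [hc]⟩
    · exact ⟨true, by simp [h c hc]⟩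
  have := Nat.card_le_card_of_surjective _ hsurj
  simp [Nat.card_eq_fintype_card] at this
  omega

lemma constVAdd_mem_of_card [FiniteDimensional F V] (hF : 2 < Nat.card F)
    (h1 : finrank F V = 1) (p : P) (v : V) :
    AffineEquiv.constVAdd F P v ∈ Subgroup.closure {r : P ≃ᵃ[F] P | IsAffRefl r} := by
  obtain ⟨c, hc0, hc1⟩ := exists_ne_zero_ne_one hF
  have hc0' : c⁻¹ ≠ 0 := inv_ne_zero hc0
  have h10 : (1 : F) - c⁻¹ ≠ 0 := by
    rw [sub_ne_zero]
    intro hcontra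
    exact hc1 (by rw [← inv_inv c, ← hcontra, inv_one])
  set d : F := (1 - c⁻¹)⁻¹ with hd_def
  have hd : (1 - c⁻¹) * d = 1 := mul_inv_cancel₀ h10
  set q : P := d • v +ᵥ p with hq_def
  -- membership of the two homotheties
  have hmem : ∀ (c' : F) (hc' : c' ≠ 0) (p' : P),
      PhiAff p' (scalarEquiv c' hc' : V ≃ₗ[F] V) ∈
        Subgroup.closure {r : P ≃ᵃ[F] P | IsAffRefl r} := by
    intro c' hc' p'
    have hq1 : 0 < finrank F V := by omega
    set b : Basis (Fin (finrank F V)) F V := finBasis F V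
    set φ : V →ₗ[F] F := b.coord ⟨0, hq1⟩ with hφ_def
    have hφs : Function.Surjective φ := by
      intro y
      exact ⟨y • b ⟨0, hq1⟩, by simp [hφ_def]⟩
    apply phi_mem p' φ hφs
    intro w hw
    have hw0 : w = 0 := by
      have hrepr : b.repr w = 0 := by
        ext i
        have hi : i = ⟨0, hq1⟩ := by
          apply Fin.ext
          have := i.isLt
          omega
        rw [hi]
        simpa [hφ_def] using hw
      have := congrArg b.repr.symm hrepr
      simpa using this
    rw [hw0]
    exact (map_zero _)
  have key : AffineEquiv.constVAdd F P v
      = PhiAff q (scalarEquiv c⁻¹ hc0' : V ≃ₗ[F] V) * PhiAff p (scalarEquiv c hc0) := by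
    ext x
    show v +ᵥ x = c⁻¹ • ((c • (x -ᵥ p) +ᵥ p) -ᵥ q) +ᵥ q
    rw [hq_def]
    have hA : ((c • (x -ᵥ p) +ᵥ p : P) -ᵥ (d • v +ᵥ p)) = c • (x -ᵥ p) - d • v := by
      rw [vsub_vadd_eq_vsub_sub, vadd_vsub]
    rw [hA, vadd_vadd]
    have hx : x = (x -ᵥ p) +ᵥ p := (vsub_vadd x p).symm
    conv_lhs => rw [hx, vadd_vadd]
    congr 1
    rw [smul_sub, smul_smul, smul_smul, inv_mul_cancel₀ hc0, one_smul]
    have h3 : d • v - (c⁻¹ * d) • v = v := by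
      rw [← sub_smul]
      have : d - c⁻¹ * d = 1 := by linear_combination hd
      rw [this, one_smul]
    have h4 : (x -ᵥ p) - (c⁻¹ * d) • v + d • v = (x -ᵥ p) + (d • v - (c⁻¹ * d) • v) := by abel
    rw [h4, h3]
    abel
  rw [key]
  exact Subgroup.mul_mem _ (hmem c⁻¹ hc0' q) (hmem c hc0 p)

end Homothety


section GLpart

variable {F V : Type*} [Field F] [AddCommGroup V] [Module F V]
variable {n : ℕ}
open scoped Matrix in
lemma toLin_transvection_fix (b : Basis (Fin n) F V) (i j : Fin n) (c : F) (x : V)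
    (hx : b.repr x j = 0) : Matrix.toLin b b (Matrix.transvection i j c) x = x := by
  rw [Matrix.transvection, map_add, LinearMap.add_apply, Matrix.toLin_one, LinearMap.id_apply]
  rw [Matrix.toLin_apply]
  rw [Matrix.single_mulVec]
  rw [add_eq_left]
  rw [hx, mul_zero]
  apply Finset.sum_eq_zero
  intro k _
  rcases eq_or_ne k i with rfl | hk
  · simp
  · rw [Function.update_of_ne hk]
    simp

open scoped Matrix in
lemma toLin_diag_fix (b : Basis (Fin n) F V) (k : Fin n) (d : F) (x : V)
    (hx : b.repr x k = 0) :
    Matrix.toLin b b (Matrix.diagonal (fun l => if l = k then d else 1)) x = x := by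
  rw [Matrix.toLin_apply]
  have : ∀ l : Fin n, (Matrix.diagonal (fun l => if l = k then d else 1) *ᵥ b.repr x) l
      • b l = b.repr x l • b l := by
    intro l
    rw [Matrix.mulVec_diagonal]
    rcases eq_or_ne l k with rfl | hl
    · simp [hx]
    · rw [if_neg hl, one_mul]
  rw [Finset.sum_congr rfl (fun l _ => this l)]
  exact b.sum_repr x

noncomputable def chi (b : Basis (Fin n) F V) :
    (Matrix (Fin n) (Fin n) F)ˣ ≃* (V ≃ₗ[F] V) :=
  (Units.mapEquiv (Matrix.toLinAlgEquiv b).toRingEquiv.toMulEquiv).trans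
    (LinearMap.GeneralLinearGroup.generalLinearEquiv F V)

lemma chi_apply (b : Basis (Fin n) F V) (u : (Matrix (Fin n) (Fin n) F)ˣ) (w : V) :
    (chi b u) w = Matrix.toLin b b (↑u) w := rfl

/-- Any linear automorphism maps into a subgroup containing the images of all
automorphisms fixing the kernel of a surjective functional pointwise. -/
lemma glgen [FiniteDimensional F V] {G : Type*} [Group G] (K : Subgroup G)
    (Ψ : (V ≃ₗ[F] V) →* G)
    (hK : ∀ (e' : V ≃ₗ[F] V) (φ : V →ₗ[F] F), Function.Surjective φ →
      (∀ w ∈ LinearMap.ker φ, e' w = w) → Ψ e' ∈ K)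
    (e : V ≃ₗ[F] V) : Ψ e ∈ K := by
  set b : Basis (Fin (finrank F V)) F V := finBasis F V with hb
  set χ := chi b with hχ
  set u : (Matrix (Fin (finrank F V)) (Fin (finrank F V)) F)ˣ := χ.symm e with hu_def
  obtain ⟨L, L', D, hM⟩ :=
    Matrix.Pivot.exists_list_transvec_mul_diagonal_mul_list_transvec
      (↑u : Matrix (Fin (finrank F V)) (Fin (finrank F V)) F)
  -- key criterion
  have hKu : ∀ (u' : (Matrix (Fin (finrank F V)) (Fin (finrank F V)) F)ˣ) (k : Fin (finrank F V)),
      (∀ x : V, b.repr x k = 0 → Matrix.toLin b b (↑u') x = x) → Ψ (χ u') ∈ K := by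
    intro u' k hfix
    have hsurj : Function.Surjective (b.coord k) := by
      intro y
      exact ⟨y • b k, by simp⟩
    apply hK (χ u') (b.coord k) hsurj
    intro w hw
    rw [chi_apply]
    apply hfix
    simpa using hw
  -- each diagonal entry is nonzero
  have hD : ∀ k, D k ≠ 0 := by
    have h1 : IsUnit (↑u : Matrix (Fin (finrank F V)) (Fin (finrank F V)) F).det := (Matrix.isUnit_iff_isUnit_det _).mp u.isUnit
    rw [hM] at h1
    simp only [Matrix.det_mul, Matrix.TransvectionStruct.det_toMatrix_prod, Matrix.det_diagonal, one_mul,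
      mul_one] at h1
    rw [isUnit_iff_ne_zero] at h1
    intro k hk
    exact h1 (Finset.prod_eq_zero (Finset.mem_univ k) hk)
  -- units for the factors
  have hut : ∀ t : Matrix.TransvectionStruct (Fin (finrank F V)) F, IsUnit t.toMatrix := by
    intro t
    rw [Matrix.isUnit_iff_isUnit_det, Matrix.TransvectionStruct.det]
    exact isUnit_one
  have hud : ∀ k : Fin (finrank F V),
      IsUnit (Matrix.diagonal (fun l => if l = k then D k else 1)) := by
    intro k
    rw [Matrix.isUnit_iff_isUnit_det, Matrix.det_diagonal]
    simp [isUnit_iff_ne_zero, hD k]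
  set ut : Matrix.TransvectionStruct (Fin (finrank F V)) F →
      (Matrix (Fin (finrank F V)) (Fin (finrank F V)) F)ˣ := fun t => (hut t).unit with hut_def
  set ud : Fin (finrank F V) → (Matrix (Fin (finrank F V)) (Fin (finrank F V)) F)ˣ :=
    fun k => (hud k).unit with hud_def
  set dRH := Matrix.diagonalRingHom (Fin (finrank F V)) F with hdRH
  -- the unit-level factorization
  have hdiag : (List.ofFn (fun k => Matrix.diagonal
      (fun l => if l = k then D k else 1))).prod = Matrix.diagonal D := by
    have h0 : (List.ofFn fun k : Fin (finrank F V) => Matrix.diagonal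
        (fun l => if l = k then D k else 1))
        = (List.ofFn (fun (k : Fin (finrank F V)) (l : Fin (finrank F V)) =>
            if l = k then D k else 1)).map dRH := by
      rw [List.map_ofFn]
      rfl
    rw [h0, ← map_list_prod dRH, List.prod_ofFn]
    show dRH _ = dRH D
    congr 1
    funext l
    rw [Finset.prod_apply]
    simp
  have hcoe : ∀ (l : List (Matrix (Fin (finrank F V)) (Fin (finrank F V)) F)ˣ),
      ((l.prod : _ˣ) : Matrix (Fin (finrank F V)) (Fin (finrank F V)) F)
        = (l.map (Units.coeHom (Matrix (Fin (finrank F V)) (Fin (finrank F V)) F))).prod := by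
    intro l
    exact map_list_prod (Units.coeHom _) l
  have hu : u = (L.map ut).prod * (List.ofFn ud).prod * (L'.map ut).prod := by
    apply Units.ext
    rw [Units.val_mul, Units.val_mul]
    have h1 : ∀ Lx : List (Matrix.TransvectionStruct (Fin (finrank F V)) F),
        (((Lx.map ut).prod : _ˣ) : Matrix (Fin (finrank F V)) (Fin (finrank F V)) F)
          = (Lx.map Matrix.TransvectionStruct.toMatrix).prod := by
      intro Lx
      rw [hcoe, List.map_map]
      congr 1
    have h2 : (((List.ofFn ud).prod : _ˣ) : Matrix (Fin (finrank F V)) (Fin (finrank F V)) F)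
        = Matrix.diagonal D := by
      rw [hcoe, List.map_ofFn, ← hdiag]
      congr 1
    rw [h1, h1, h2]
    exact hM
  -- conclude
  set Θ := Ψ.comp χ.toMonoidHom with hΘ
  have he : Ψ e = Θ u := by
    simp [hΘ, hu_def]
  have hmemt : ∀ (Lx : List (Matrix.TransvectionStruct (Fin (finrank F V)) F)),
      Θ (Lx.map ut).prod ∈ K := by
    intro Lx
    rw [MonoidHom.map_list_prod]
    apply Subgroup.list_prod_mem
    intro x hx
    rw [List.map_map, List.mem_map] at hx
    obtain ⟨t, _, rfl⟩ := hx
    apply hKu (ut t) t.j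
    intro x hxj
    have hcoe' : ((ut t : _ˣ) : Matrix (Fin (finrank F V)) (Fin (finrank F V)) F)
        = Matrix.transvection t.i t.j t.c := by
      simp [hut_def, Matrix.TransvectionStruct.toMatrix]
    rw [hcoe']
    exact toLin_transvection_fix b t.i t.j t.c x hxj
  rw [he, hu, _root_.map_mul, _root_.map_mul]
  refine Subgroup.mul_mem _ (Subgroup.mul_mem _ (hmemt L) ?_) (hmemt L')
  rw [MonoidHom.map_list_prod]
  apply Subgroup.list_prod_mem
  intro x hx
  rw [List.map_ofFn, List.mem_ofFn] at hx
  obtain ⟨k, rfl⟩ := hx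
  apply hKu (ud k) k
  intro x hxk
  have hcoe' : ((ud k : _ˣ) : Matrix (Fin (finrank F V)) (Fin (finrank F V)) F)
      = Matrix.diagonal (fun l => if l = k then D k else 1) := by
    simp [hud_def]
  rw [hcoe']
  exact toLin_diag_fix b k (D k) x hxk


end GLpart

theorem stmt11 {F V P : Type*} [Field F] [AddCommGroup V] [Module F V]
    [FiniteDimensional F V] [AddTorsor V P]
    (h : 2 ≤ Module.finrank F V ∨ (2 < Nat.card F ∧ 1 ≤ Module.finrank F V)) :
    Subgroup.closure {r : P ≃ᵃ[F] P | IsAffRefl r} = ⊤ := by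
  rw [Subgroup.eq_top_iff']
  intro g
  obtain ⟨p⟩ : Nonempty P := inferInstance
  have hlin : PhiAff p g.linear ∈ Subgroup.closure {r : P ≃ᵃ[F] P | IsAffRefl r} :=
    glgen _ (PhiAff p) (fun e' φ hs hfix => phi_mem p φ hs hfix) g.linear
  have htrans : AffineEquiv.constVAdd F P (g p -ᵥ p)
      ∈ Subgroup.closure {r : P ≃ᵃ[F] P | IsAffRefl r} := by
    rcases h with h2 | ⟨hF, h1⟩
    · exact constVAdd_mem_of_two h2 p _
    · rcases Nat.lt_or_ge (finrank F V) 2 with hlt | hge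
      · have h1' : finrank F V = 1 := by omega
        exact constVAdd_mem_of_card hF h1' p _
      · exact constVAdd_mem_of_two hge p _
  have hg : g = AffineEquiv.constVAdd F P (g p -ᵥ p) * PhiAff p g.linear := by
    ext x
    show g x = (g p -ᵥ p) +ᵥ (g.linear (x -ᵥ p) +ᵥ p)
    have h1 : g x = g.linear (x -ᵥ p) +ᵥ g p := by
      conv_lhs => rw [← vsub_vadd x p]
      exact g.map_vadd p (x -ᵥ p)
    rw [h1, vadd_vadd, add_comm, ← vadd_vadd, vsub_vadd]
  rw [hg]
  exact Subgroup.mul_mem _ htrans hlin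
end

section
/- If g̃ in GA(Ṽ) fixes a point (g̃ is elliptic), then the reflection length of g̃ in GA(Ṽ) equals dim mov(g̃). -/
open Module Pointwise

/-!
Both sides are governed by the codimension of the fixed space of the linear part. The linear part
of an affine reflection fixes the direction of its mirror, so its fixed space has codimension at
most one, and codimensions of fixed spaces are subadditive under products; this bounds the length
from below. If `g a = a`, then `mov g` is the range of `g.linear - 1`, whose dimension is that
codimension. Conversely, moving `g` to the linear automorphism `g.linear` around `a`, one peels off
linear reflections one at a time, each enlarging the fixed space (Scherk's argument), and transports
them back as affine reflections whose mirrors pass through `a`.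
-/

namespace Submodule

variable {K V : Type*} [DivisionRing K] [AddCommGroup V] [Module K V]

theorem finrank_quotient_le_of_le [Module.Finite K V] {W W' : Submodule K V} (h : W ≤ W') :
    finrank K (V ⧸ W') ≤ finrank K (V ⧸ W) :=
  LinearMap.finrank_le_finrank_of_surjective (factor_surjective h)

theorem exists_dual_le_ker_apply_ne_zero_of_notMem {W : Submodule K V}
    {u v : V} (hu : u ∉ W) (hv : v ∉ W) :
    ∃ f : Dual K V, W ≤ LinearMap.ker f ∧ f u ≠ 0 ∧ f v ≠ 0 := by
  obtain ⟨f₁, hf₁u, hf₁W⟩ := W.exists_dual_map_eq_bot_of_notMem hu inferInstance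
  obtain ⟨f₂, hf₂v, hf₂W⟩ := W.exists_dual_map_eq_bot_of_notMem hv inferInstance
  rw [← LinearMap.le_ker_iff_map] at hf₁W hf₂W
  by_cases hf₁v : f₁ v = 0
  · by_cases hf₂u : f₂ u = 0
    · exact ⟨f₁ + f₂, fun x hx ↦ by simp [LinearMap.mem_ker.mp (hf₁W hx),
        LinearMap.mem_ker.mp (hf₂W hx)], by simpa [hf₂u], by simpa [hf₁v]⟩
    · exact ⟨f₂, hf₂W, hf₂u, hf₂v⟩
  · exact ⟨f₁, hf₁W, hf₁u, hf₁v⟩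

end Submodule

namespace LinearEquiv

variable {K V : Type*} [DivisionRing K] [AddCommGroup V] [Module K V] [Module.Finite K V]

theorem finrank_quotient_fixedSubmodule_eq_one_of_mem_dilatransvections {s : V ≃ₗ[K] V}
    (hs : s ∈ dilatransvections K V) (h1 : s ≠ 1) :
    finrank K (V ⧸ s.fixedSubmodule) = 1 := by
  refine le_antisymm (mem_dilatransvections_iff_finrank_quotient.mp hs) ?_
  have : Nontrivial (V ⧸ s.fixedSubmodule) :=
    Submodule.Quotient.nontrivial_iff.mpr fun h ↦ h1 (fixedSubmodule_eq_top_iff.mp h)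
  exact Module.finrank_pos

/-- For `v` not fixed by `e`, take the dilatransvection `s` that fixes `e.fixedSubmodule` and sends
`v` to `e v`: then `s⁻¹ * e` fixes `e.fixedSubmodule ⊔ K ∙ v`. -/
theorem exists_finrank_quotient_fixedSubmodule_inv_mul_lt {e : V ≃ₗ[K] V} (he : e ≠ 1) :
    ∃ s : V ≃ₗ[K] V, finrank K (V ⧸ s.fixedSubmodule) = 1 ∧
      finrank K (V ⧸ (s⁻¹ * e).fixedSubmodule) < finrank K (V ⧸ e.fixedSubmodule) := by
  set W := e.fixedSubmodule
  obtain ⟨v, hv⟩ := SetLike.exists_not_mem_of_ne_top W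
    (fun h ↦ he (fixedSubmodule_eq_top_iff.mp h)) rfl
  have hev : e v ∉ W := fun h ↦ hv (LinearMap.mem_fixedSubmodule_iff.mpr
    (e.injective (LinearMap.mem_fixedSubmodule_iff.mp h)))
  obtain ⟨f, hWf, hfv, hfev⟩ := W.exists_dual_le_ker_apply_ne_zero_of_notMem hv hev
  have hunit : IsUnit (1 + f ((f v)⁻¹ • (e v - v))) := by
    have : 1 + f ((f v)⁻¹ • (e v - v)) = (f v)⁻¹ * f (e v) := by
      rw [f.map_smul, map_sub, smul_eq_mul, mul_sub, inv_mul_cancel₀ hfv, add_sub_cancel]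
    exact isUnit_iff_ne_zero.mpr (this ▸ mul_ne_zero (inv_ne_zero hfv) hfev)
  set s := dilatransvection hunit
  have hsv : s v = e v := by
    simp [s, dilatransvection.apply, smul_smul, mul_inv_cancel₀ hfv]
  have hsW : ∀ x ∈ W, s x = x := fun x hx ↦ by
    simp [s, dilatransvection.apply, LinearMap.mem_ker.mp (hWf hx)]
  have hfix : W ⊔ K ∙ v ≤ (s⁻¹ * e).fixedSubmodule := by
    refine sup_le (fun x hx ↦ ?_) ((Submodule.span_singleton_le_iff_mem _ _).mpr ?_)
    · have hex : e x = x := LinearMap.mem_fixedSubmodule_iff.mp hx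
      simp [symm_apply_eq, hex, hsW x hx]
    · simp [symm_apply_eq, hsv]
  refine ⟨s, finrank_quotient_fixedSubmodule_eq_one_of_mem_dilatransvections
    dilatransvection_mem_dilatransvections fun h ↦ hv ?_, ?_⟩
  · exact LinearMap.mem_fixedSubmodule_iff.mpr (by simpa [h] using hsv.symm)
  · calc finrank K (V ⧸ (s⁻¹ * e).fixedSubmodule) ≤ finrank K (V ⧸ W ⊔ K ∙ v) :=
          Submodule.finrank_quotient_le_of_le hfix
      _ < finrank K (V ⧸ W) := by
          rw [← finrank_quotient_sup_span_singleton hv]; omega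

theorem exists_list_prod_eq_length_le_finrank_quotient_fixedSubmodule (e : V ≃ₗ[K] V) :
    ∃ l : List (V ≃ₗ[K] V), (∀ s ∈ l, finrank K (V ⧸ s.fixedSubmodule) = 1) ∧ l.prod = e ∧
      l.length ≤ finrank K (V ⧸ e.fixedSubmodule) := by
  induction h : finrank K (V ⧸ e.fixedSubmodule) using Nat.strong_induction_on generalizing e
    with | _ n ih =>
  by_cases he : e = 1
  · exact ⟨[], by simp, he.symm, by simp⟩
  obtain ⟨s, hs, hlt⟩ := exists_finrank_quotient_fixedSubmodule_inv_mul_lt he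
  obtain ⟨l, hl, hprod, hlen⟩ := ih _ (h ▸ hlt) (s⁻¹ * e) rfl
  refine ⟨s :: l, ?_, by simp [hprod], ?_⟩
  · simpa [hs] using hl
  · simp only [List.length_cons]
    omega

theorem finrank_quotient_fixedSubmodule_list_prod_le (l : List (V ≃ₗ[K] V))
    (hl : ∀ s ∈ l, s ∈ dilatransvections K V) :
    finrank K (V ⧸ l.prod.fixedSubmodule) ≤ l.length := by
  induction l with
  | nil =>
    rw [List.prod_nil]
    have : Subsingleton (V ⧸ (1 : V ≃ₗ[K] V).fixedSubmodule) :=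
      Submodule.Quotient.subsingleton_iff.mpr (fixedSubmodule_eq_top_iff.mpr rfl)
    exact finrank_zero_of_subsingleton.le
  | cons s l ih =>
    rw [List.prod_cons, List.length_cons]
    have h₁ := le_one_add_finrank_fixedSubmodule_dilatransvection_mul l.prod s
      (hl s List.mem_cons_self)
    have h₂ := ih fun t ht ↦ hl t (List.mem_cons_of_mem s ht)
    have h₃ := Submodule.finrank_quotient_add_finrank l.prod.fixedSubmodule
    have h₄ := Submodule.finrank_quotient_add_finrank (s * l.prod).fixedSubmodule
    omega

end LinearEquiv

@[simp]
theorem Submodule.vectorSpan_coe {k V : Type*} [Ring k] [AddCommGroup V] [Module k V]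
    (S : Submodule k V) : vectorSpan k (S : Set V) = S := by
  rw [vectorSpan_eq_span_vsub_set_right k S.zero_mem]
  simp

namespace AffineEquiv

variable {k V P : Type*} [Ring k] [AddCommGroup V] [Module k V] [AddTorsor V P]

def ofLinearAt (a : P) : (V ≃ₗ[k] V) →* P ≃ᵃ[k] P where
  toFun s := (vaddConst k a).symm.trans (s.toAffineEquiv.trans (vaddConst k a))
  map_one' := by ext; simp
  map_mul' s t := by ext; simp

@[simp]
theorem ofLinearAt_apply (a : P) (s : V ≃ₗ[k] V) (x : P) :
    ofLinearAt a s x = s (x -ᵥ a) +ᵥ a :=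
  rfl

theorem ofLinearAt_linear {g : P ≃ᵃ[k] P} {a : P} (ha : g a = a) : ofLinearAt a g.linear = g := by
  ext x
  conv_rhs => rw [← vsub_vadd x a, g.map_vadd, ha]
  rfl

end AffineEquiv

section Reflections

variable {F V P : Type*} [Field F] [AddCommGroup V] [Module F V] [AddTorsor V P]

theorem isAffRefl_ofLinearAt (a : P) {s : V ≃ₗ[F] V}
    (hs : finrank F (V ⧸ s.fixedSubmodule) = 1) : IsAffRefl (AffineEquiv.ofLinearAt a s) := by
  refine ⟨AffineSubspace.mk' a s.fixedSubmodule, ?_, by rwa [AffineSubspace.direction_mk']⟩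
  ext x
  rw [SetLike.mem_coe, AffineSubspace.mem_mk', LinearMap.mem_fixedSubmodule_iff, Set.mem_ofPred_eq,
    AffineEquiv.ofLinearAt_apply, eq_comm (a := _ +ᵥ a), eq_vadd_iff_vsub_eq, eq_comm]
  rfl

theorem IsAffRefl.linear_mem_dilatransvections [FiniteDimensional F V] {r : P ≃ᵃ[F] P}
    (hr : IsAffRefl r) : r.linear ∈ LinearEquiv.dilatransvections F V := by
  obtain ⟨H, hH, hcodim⟩ := hr
  have hfix : ∀ p ∈ H, r p = p := fun p hp ↦ by
    have : p ∈ (H : Set P) := hp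
    rwa [hH] at this
  have hdir : H.direction ≤ r.linear.fixedSubmodule := by
    rw [H.direction_eq_vectorSpan, vectorSpan_def, Submodule.span_le]
    rintro _ ⟨p, hp, q, hq, rfl⟩
    rw [SetLike.mem_coe, LinearMap.mem_fixedSubmodule_iff, LinearEquiv.coe_coe]
    calc r.linear (p -ᵥ q) = r p -ᵥ r q := r.toAffineMap.linearMap_vsub p q
      _ = p -ᵥ q := by rw [hfix p hp, hfix q hq]
  rw [LinearEquiv.mem_dilatransvections_iff_finrank_quotient, ← hcodim]
  exact Submodule.finrank_quotient_le_of_le hdir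

theorem reflLenA_list_prod_le {l : List (P ≃ᵃ[F] P)} (hl : ∀ r ∈ l, IsAffRefl r) :
    reflLenA l.prod ≤ l.length :=
  sInf_le ⟨l, hl, rfl, rfl⟩

theorem mov_eq_range_of_apply_eq {g : P ≃ᵃ[F] P} {a : P} (ha : g a = a) :
    mov g = Set.range fun v ↦ g.linear v - v := by
  rw [mov, ← (Equiv.vaddConst a).surjective.range_comp]
  congr 1
  funext v
  simp [g.map_vadd, ha]

theorem movDim_eq_finrank_quotient_fixedSubmodule [FiniteDimensional F V] {g : P ≃ᵃ[F] P}
    {a : P} (ha : g a = a) : movDim g = finrank F (V ⧸ g.linear.fixedSubmodule) := by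
  have hmov : mov g = LinearMap.range ((g.linear : V →ₗ[F] V) - LinearMap.id) := by
    rw [mov_eq_range_of_apply_eq ha]
    rfl
  rw [movDim, hmov, Submodule.vectorSpan_coe, LinearMap.fixedSubmodule_eq_ker]
  exact (LinearMap.quotKerEquivRange _).finrank_eq.symm

end Reflections

theorem stmt14 {F V P : Type*} [Field F] [AddCommGroup V] [Module F V]
    [FiniteDimensional F V] [AddTorsor V P]
    (g : P ≃ᵃ[F] P) (a : P) (ha : g a = a) :
    reflLenA g = (movDim g : ℕ∞) := by
  rw [movDim_eq_finrank_quotient_fixedSubmodule ha]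
  apply le_antisymm
  · obtain ⟨l, hl, hprod, hlen⟩ :=
      g.linear.exists_list_prod_eq_length_le_finrank_quotient_fixedSubmodule
    calc reflLenA g = reflLenA (l.map (AffineEquiv.ofLinearAt a)).prod := by
          rw [← map_list_prod, hprod, AffineEquiv.ofLinearAt_linear ha]
      _ ≤ (l.map (AffineEquiv.ofLinearAt a)).length :=
          reflLenA_list_prod_le (by simpa using fun s hs ↦ isAffRefl_ofLinearAt a (hl s hs))
      _ ≤ _ := by simpa using hlen
  · refine le_sInf ?_
    rintro _ ⟨l, hl, rfl, rfl⟩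
    have := LinearEquiv.finrank_quotient_fixedSubmodule_list_prod_le (l.map AffineEquiv.linearHom)
      (by simpa using fun r hr ↦ (hl r hr).linear_mem_dilatransvections)
    rw [← map_list_prod, List.length_map] at this
    exact_mod_cast this
end

section
/- If g̃ in GA(Ṽ) satisfies ℓ(g̃) = dim mov(g̃), where ℓ is reflection length in GA(Ṽ), then g̃ fixes a point of Ṽ. -/
open Module Pointwise

section Aux

variable {F V P : Type*} [Field F] [AddCommGroup V] [Module F V]
    [FiniteDimensional F V] [AddTorsor V P]

/-- The span of the moved set of a reflection has dimension at most 1. -/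
lemma aux_refl_span (r : P ≃ᵃ[F] P) (hr : IsAffRefl r) :
    finrank F (Submodule.span F (mov r)) ≤ 1 := by
  obtain ⟨H, hfix, hcodim⟩ := hr
  rcases (H : Set P).eq_empty_or_nonempty with hemp | ⟨p, hp⟩
  · have hbot : H = ⊥ := by
      rwa [← AffineSubspace.coe_eq_bot_iff]
    rw [hbot, AffineSubspace.direction_bot] at hcodim
    have : finrank F V = 1 := by
      rw [← hcodim]
      exact (Submodule.quotEquivOfEqBot (⊥ : Submodule F V) rfl).symm.finrank_eq
    calc finrank F (Submodule.span F (mov r)) ≤ finrank F V := Submodule.finrank_le _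
      _ = 1 := this
  · have hrp : r p = p := by
      have := hfix ▸ hp
      exact this
    set f : V →ₗ[F] V := r.linear.toLinearMap - LinearMap.id with hf
    have hmem : mov r ⊆ LinearMap.range f := by
      rintro - ⟨x, rfl⟩
      refine ⟨x -ᵥ p, ?_⟩
      have hx : x = (x -ᵥ p) +ᵥ p := (vsub_vadd x p).symm
      calc f (x -ᵥ p) = r.linear (x -ᵥ p) - (x -ᵥ p) := rfl
        _ = (r.linear (x -ᵥ p) +ᵥ p) -ᵥ ((x -ᵥ p) +ᵥ p) := (vadd_vsub_vadd_cancel_right _ _ _).symm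
        _ = r ((x -ᵥ p) +ᵥ p) -ᵥ ((x -ᵥ p) +ᵥ p) := by rw [AffineEquiv.map_vadd, hrp]
        _ = r x -ᵥ x := by rw [← hx]
    have hker : H.direction ≤ LinearMap.ker f := by
      intro w hw
      have hmem' : w +ᵥ p ∈ H := AffineSubspace.vadd_mem_of_mem_direction hw hp
      have hfixw : r (w +ᵥ p) = w +ᵥ p := by
        have h' : (w +ᵥ p) ∈ (H : Set P) := hmem'
        rw [hfix] at h'
        exact h' 
      rw [AffineEquiv.map_vadd, hrp] at hfixw
      have : r.linear w = w := vadd_right_cancel p hfixw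
      simp [hf, LinearMap.mem_ker, this]
    have h1 : finrank F (LinearMap.range f) + finrank F (LinearMap.ker f) = finrank F V :=
      LinearMap.finrank_range_add_finrank_ker f
    have h2 : finrank F (V ⧸ H.direction) + finrank F H.direction = finrank F V :=
      Submodule.finrank_quotient_add_finrank _
    have h3 : finrank F H.direction ≤ finrank F (LinearMap.ker f) :=
      Submodule.finrank_mono hker
    have h4 : finrank F (Submodule.span F (mov r)) ≤ finrank F (LinearMap.range f) :=
      Submodule.finrank_mono (Submodule.span_le.mpr hmem)
    omega

lemma aux_prod_span (l : List (P ≃ᵃ[F] P)) (hl : ∀ r ∈ l, IsAffRefl r) :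
    finrank F (Submodule.span F (mov l.prod)) ≤ l.length := by
  induction l with
  | nil =>
    have : Submodule.span F (mov (List.prod ([] : List (P ≃ᵃ[F] P)))) ≤ ⊥ := by
      rw [Submodule.span_le]
      rintro - ⟨x, rfl⟩
      simp [List.prod_nil, AffineEquiv.one_def]
    simpa using Submodule.finrank_mono this
  | cons r l ih =>
    have hsub : Submodule.span F (mov (r :: l).prod) ≤
        Submodule.span F (mov r) ⊔ Submodule.span F (mov l.prod) := by
      rw [Submodule.span_le]
      rintro - ⟨x, rfl⟩
      show (r :: l).prod x -ᵥ x ∈ _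
      have : (r :: l).prod x -ᵥ x = (r (l.prod x) -ᵥ l.prod x) + (l.prod x -ᵥ x) := by
        rw [List.prod_cons]
        show (r * l.prod) x -ᵥ x = _
        rw [AffineEquiv.coe_mul]
        simp [vsub_add_vsub_cancel]
      rw [this]
      exact Submodule.add_mem _
        (Submodule.mem_sup_left (Submodule.subset_span ⟨l.prod x, rfl⟩))
        (Submodule.mem_sup_right (Submodule.subset_span ⟨x, rfl⟩))
    calc finrank F (Submodule.span F (mov (r :: l).prod))
        ≤ finrank F (Submodule.span F (mov r) ⊔ Submodule.span F (mov l.prod) : Submodule F V) :=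
          Submodule.finrank_mono hsub
      _ ≤ finrank F (Submodule.span F (mov r)) + finrank F (Submodule.span F (mov l.prod)) :=
          Submodule.finrank_add_le_finrank_add_finrank _ _
      _ ≤ 1 + l.length := by
          have := aux_refl_span r (hl r List.mem_cons_self)
          have := ih (fun s hs => hl s (List.mem_cons_of_mem r hs))
          omega
      _ = (r :: l).length := by simp [List.length_cons]; omega

end Aux

theorem stmt15 {F V P : Type*} [Field F] [AddCommGroup V] [Module F V]
    [FiniteDimensional F V] [AddTorsor V P]
    (g : P ≃ᵃ[F] P) (h : reflLenA g = (movDim g : ℕ∞)) :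
    ∃ a : P, g a = a := by
  by_contra hno
  push_neg at hno
  have p : P := Classical.arbitrary P
  set f : V →ₗ[F] V := g.linear.toLinearMap - LinearMap.id with hf
  set c : V := g p -ᵥ p with hc
  -- vectorSpan of mov g is inside range f
  have hvs : vectorSpan F (mov g) ≤ LinearMap.range f := by
    rw [vectorSpan, Submodule.span_le]
    rintro - ⟨-, ⟨x, rfl⟩, -, ⟨y, rfl⟩, rfl⟩
    refine ⟨x -ᵥ y, ?_⟩
    show f (x -ᵥ y) = (g x -ᵥ x) -ᵥ (g y -ᵥ y)
    rw [vsub_eq_sub]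
    calc f (x -ᵥ y) = g.linear (x -ᵥ y) - (x -ᵥ y) := rfl
      _ = (g x -ᵥ g y) - (x -ᵥ y) := by
          congr 1
          exact AffineMap.linearMap_vsub g.toAffineMap x y
      _ = (g x -ᵥ x) - (g y -ᵥ y) := vsub_sub_vsub_comm _ _ _ _
  -- c not in range f (else fixed point)
  have hcf : c ∉ LinearMap.range f := by
    intro hcr
    obtain ⟨w, hw⟩ := LinearMap.mem_range.mp hcr
    apply hno ((-w) +ᵥ p)
    have hw' : g.linear w - w = g p -ᵥ p := hw
    have hgp : g p = (g.linear w - w) +ᵥ p := by rw [hw', vsub_vadd]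
    rw [AffineEquiv.map_vadd, hgp, vadd_vadd]
    congr 1
    rw [map_neg]
    abel
  have hcne : c ∉ vectorSpan F (mov g) := fun hmem => hcf (hvs hmem)
  -- strict inclusion vectorSpan < span
  have hle : vectorSpan F (mov g) ≤ Submodule.span F (mov g) := by
    rw [vectorSpan, Submodule.span_le]
    rintro - ⟨a, ha, b, hb, rfl⟩
    show a -ᵥ b ∈ _
    rw [vsub_eq_sub]
    exact sub_mem (Submodule.subset_span ha) (Submodule.subset_span hb)
  have hcmem : c ∈ Submodule.span F (mov g) := Submodule.subset_span ⟨p, rfl⟩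
  have hlt : vectorSpan F (mov g) < Submodule.span F (mov g) :=
    hle.lt_of_ne (fun heq => hcne (heq ▸ hcmem))
  have hdim : movDim g < finrank F (Submodule.span F (mov g)) :=
    Submodule.finrank_lt_finrank_of_lt hlt
  -- lower bound on reflLenA
  have hbound : ((movDim g + 1 : ℕ) : ℕ∞) ≤ reflLenA g := by
    apply le_sInf
    rintro n ⟨l, hrefl, hprod, hlen⟩
    have := aux_prod_span l hrefl
    rw [hprod] at this
    rw [← hlen]
    exact_mod_cast by omega
  rw [h] at hbound
  have : movDim g + 1 ≤ movDim g := by exact_mod_cast hbound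
  omega
end

section
/- Let |F| > 2 and let g̃ ∈ GA(Ṽ) be parabolic, i.e., g̃ has no fixed point and is not a translation. Then the reflection length of g̃ equals dim mov(g̃) + 1. -/
open Module Pointwise

set_option linter.unusedSectionVars false

section Stmt18Aux

open LinearMap

variable {F V P : Type*} [Field F] [AddCommGroup V] [Module F V] [AddTorsor V P]

/-- transvection-like map u ↦ u + ψ(u) • w -/
def tv (ψ : V →ₗ[F] F) (w : V) : V →ₗ[F] V := LinearMap.id + ψ.smulRight w

@[simp] lemma tv_apply (ψ : V →ₗ[F] F) (w u : V) : tv ψ w u = u + ψ u • w := rfl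

lemma tv_comp (ψ ψ' : V →ₗ[F] F) (w : V) :
    (tv ψ w).comp (tv ψ' w) = tv (ψ' + ψ + (ψ w) • ψ') w := by
  ext u
  simp [tv, smul_smul, smul_add, add_smul, mul_comm]
  module

/-- invertible transvection-like map -/
noncomputable def tvE (ψ : V →ₗ[F] F) (w : V) (h : 1 + ψ w ≠ 0) : V ≃ₗ[F] V :=
  LinearEquiv.ofLinear (tv ψ w) (tv (-((1 + ψ w)⁻¹) • ψ) w)
    (by
      rw [tv_comp]
      have : (-((1 + ψ w)⁻¹) • ψ) + ψ + ψ w • (-((1 + ψ w)⁻¹) • ψ) = 0 := by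
        have := inv_mul_cancel₀ h
        ext u; simp; field_simp; ring
      rw [this]; ext u; simp [tv])
    (by
      rw [tv_comp]
      have : ψ + (-((1 + ψ w)⁻¹) • ψ) + (-((1 + ψ w)⁻¹) • ψ) w • ψ = 0 := by
        ext u; simp; field_simp; ring
      rw [this]; ext u; simp [tv])

@[simp] lemma tvE_coe (ψ : V →ₗ[F] F) (w : V) (h : 1 + ψ w ≠ 0) :
    (tvE ψ w h : V →ₗ[F] V) = tv ψ w := rfl

@[simp] lemma tvE_apply (ψ : V →ₗ[F] F) (w : V) (h : 1 + ψ w ≠ 0) (u : V) :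
    tvE ψ w h u = u + ψ u • w := rfl

/-- conjugation of a linear equiv to an affine equiv fixing `p` -/
noncomputable def conjAff0 (p : P) (e : V ≃ₗ[F] V) : P ≃ᵃ[F] P :=
  ((AffineEquiv.vaddConst F p).symm.trans e.toAffineEquiv).trans (AffineEquiv.vaddConst F p)

@[simp] lemma conjAff0_apply (p : P) (e : V ≃ₗ[F] V) (x : P) :
    conjAff0 p e x = e (x -ᵥ p) +ᵥ p := rfl

/-- conjugation as a monoid hom -/
noncomputable def conjAff (p : P) : (V ≃ₗ[F] V) →* (P ≃ᵃ[F] P) where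
  toFun := conjAff0 p
  map_one' := by ext x; simp
  map_mul' e₁ e₂ := AffineEquiv.ext fun x => by
    show (e₁ * e₂) (x -ᵥ p) +ᵥ p = e₁ ((e₂ (x -ᵥ p) +ᵥ p) -ᵥ p) +ᵥ p
    rw [vadd_vsub]
    rfl

@[simp] lemma conjAff_apply (p : P) (e : V ≃ₗ[F] V) (x : P) :
    conjAff p e x = e (x -ᵥ p) +ᵥ p := rfl

@[simp] lemma conjAff_linear (p : P) (e : V ≃ₗ[F] V) :
    (conjAff (F := F) p e).linear = (e : V →ₗ[F] V) := rfl


lemma exists_scalar_ne (hF : 2 < Nat.card F) (a : F) : ∃ c : F, c ≠ 0 ∧ c ≠ a := by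
  by_contra h
  push_neg at h
  have hsub : (Set.univ : Set F) ⊆ {0, a} := by
    intro c _
    rcases eq_or_ne c 0 with rfl | hc
    · exact Set.mem_insert _ _
    · exact Set.mem_insert_iff.mpr (Or.inr (h c hc))
  have : Nat.card F ≤ 2 := by
    rw [← Set.ncard_univ]
    calc (Set.univ : Set F).ncard ≤ ({0, a} : Set F).ncard :=
          Set.ncard_le_ncard hsub (Set.toFinite _)
      _ ≤ 1 + 1 := le_trans (Set.ncard_insert_le _ _) (by simp [Set.ncard_singleton])
  omega

lemma exists_dual_killing (K : Submodule F V) {x : V} (hx : x ∉ K) :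
    ∃ φ : V →ₗ[F] F, (∀ k ∈ K, φ k = 0) ∧ φ x = 1 := by
  obtain ⟨f, hfx, hfK⟩ := K.exists_dual_map_eq_bot_of_notMem hx inferInstance
  refine ⟨(f x)⁻¹ • f, fun k hk => ?_, by simp [inv_mul_cancel₀ hfx]⟩
  have : f k ∈ K.map f := Submodule.mem_map_of_mem hk
  rw [hfK] at this
  simp only [Submodule.mem_bot] at this
  simp [this]

lemma exists_dual_pair (hF : 2 < Nat.card F) (K : Submodule F V) {q p : V}
    (hq : q ∉ K) (hp : p ∉ K) :
    ∃ φ : V →ₗ[F] F, (∀ k ∈ K, φ k = 0) ∧ φ q = 1 ∧ φ p ≠ 0 := by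
  obtain ⟨φ₁, hK₁, hq₁⟩ := exists_dual_killing K hq
  rcases eq_or_ne (φ₁ p) 0 with hp₁ | hp₁
  · obtain ⟨φ₂, hK₂, hp₂⟩ := exists_dual_killing K hp
    obtain ⟨c, hc0, hcb⟩ := exists_scalar_ne hF (-(φ₂ q)⁻¹)
    have hden : 1 + c * φ₂ q ≠ 0 := by
      rcases eq_or_ne (φ₂ q) 0 with hb0 | hbne
      · rw [hb0]; simp
      · intro h
        apply hcb
        field_simp
        linear_combination h
    refine ⟨(1 + c * φ₂ q)⁻¹ • (φ₁ + c • φ₂), fun k hk => ?_, ?_, ?_⟩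
    · simp [hK₁ k hk, hK₂ k hk]
    · have : ((1 + c * φ₂ q)⁻¹ • (φ₁ + c • φ₂)) q = (1 + c * φ₂ q)⁻¹ * (1 + c * φ₂ q) := by
        simp [hq₁, smul_eq_mul]
        ring
      rw [this, inv_mul_cancel₀ hden]
    · have : ((1 + c * φ₂ q)⁻¹ • (φ₁ + c • φ₂)) p = (1 + c * φ₂ q)⁻¹ * c := by
        simp [hp₁, hp₂, smul_eq_mul]
      rw [this]
      exact mul_ne_zero (inv_ne_zero hden) hc0
  · exact ⟨φ₁, hK₁, hq₁, hp₁⟩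

lemma exists_not_mem_of_ne_top (K : Submodule F V) (hK : K ≠ ⊤) : ∃ v : V, v ∉ K := by
  by_contra h
  push_neg at h
  exact hK (Submodule.eq_top_iff'.mpr h)

lemma exists_dual_parab (hF : 2 < Nat.card F) (K : Submodule F V) (hK : K ≠ ⊤) (w : V) :
    ∃ (ψ : V →ₗ[F] F) (u : V), (∀ k ∈ K, ψ k = 0) ∧ ψ u = 1 ∧ ψ w ≠ -1 := by
  rcases em (w ∈ K) with hw | hw
  · obtain ⟨v, hv⟩ := exists_not_mem_of_ne_top K hK
    obtain ⟨ψ, hKψ, hψv⟩ := exists_dual_killing K hv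
    refine ⟨ψ, v, hKψ, hψv, ?_⟩
    rw [hKψ w hw]
    intro h
    exact one_ne_zero (α := F) (neg_eq_zero.mp h.symm)
  · obtain ⟨ψ₁, hKψ, hψw⟩ := exists_dual_killing K hw
    obtain ⟨c, hc0, hc1⟩ := exists_scalar_ne hF (-1)
    refine ⟨c • ψ₁, c⁻¹ • w, fun k hk => by simp [hKψ k hk], ?_, ?_⟩
    · simp [hψw, inv_mul_cancel₀ hc0]
    · simpa [hψw] using hc1


/-- the displacement linear map of a linear automorphism -/
def dlt (e : V ≃ₗ[F] V) : V →ₗ[F] V := (e : V →ₗ[F] V) - LinearMap.id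

lemma dlt_apply (e : V ≃ₗ[F] V) (x : V) : dlt e x = e x - x := rfl

lemma mem_ker_dlt {e : V ≃ₗ[F] V} {x : V} : x ∈ LinearMap.ker (dlt e) ↔ e x = x := by
  simp [dlt, LinearMap.mem_ker, sub_eq_zero]

/-- displacement rank -/
noncomputable def lrank (e : V ≃ₗ[F] V) : ℕ := finrank F (LinearMap.range (dlt e))

section FD

variable [FiniteDimensional F V]

lemma lrank_add_ker (e : V ≃ₗ[F] V) :
    lrank e + finrank F (LinearMap.ker (dlt e)) = finrank F V :=
  LinearMap.finrank_range_add_finrank_ker (dlt e)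

lemma dlt_tvE (ψ : V →ₗ[F] F) (w : V) (h : 1 + ψ w ≠ 0) :
    dlt (tvE ψ w h) = ψ.smulRight w := by
  ext u
  simp [dlt_apply]

lemma range_smulRight {ψ : V →ₗ[F] F} (w : V) {u : V} (hu : ψ u = 1) :
    LinearMap.range (ψ.smulRight w) = Submodule.span F {w} := by
  apply le_antisymm
  · rintro z ⟨x, rfl⟩
    exact Submodule.smul_mem _ _ (Submodule.mem_span_singleton_self w)
  · rw [Submodule.span_singleton_le_iff_mem]
    exact ⟨u, by simp [hu]⟩

lemma lrank_tvE {ψ : V →ₗ[F] F} {w : V} (h : 1 + ψ w ≠ 0) {u : V} (hu : ψ u = 1)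
    (hw : w ≠ 0) : lrank (tvE ψ w h) = 1 := by
  rw [lrank, dlt_tvE, range_smulRight w hu, finrank_span_singleton hw]

lemma range_dlt_inv (e : V ≃ₗ[F] V) :
    LinearMap.range (dlt e⁻¹) = Submodule.map (e.symm : V →ₗ[F] V) (LinearMap.range (dlt e)) := by
  have hinv : ∀ y, e⁻¹ y = e.symm y := fun _ => rfl
  ext z
  simp only [LinearMap.mem_range, Submodule.mem_map]
  constructor
  · rintro ⟨x, rfl⟩
    refine ⟨dlt e (-x), ⟨-x, rfl⟩, ?_⟩
    simp only [dlt_apply, hinv, map_sub, map_neg, e.symm_apply_apply, LinearEquiv.coe_coe]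
    abel
  · rintro ⟨y, ⟨x, rfl⟩, rfl⟩
    refine ⟨-x, ?_⟩
    simp only [dlt_apply, hinv, map_sub, map_neg, e.symm_apply_apply, LinearEquiv.coe_coe]
    abel

lemma lrank_inv (e : V ≃ₗ[F] V) : lrank e⁻¹ = lrank e := by
  rw [lrank, range_dlt_inv, LinearEquiv.finrank_map_eq e.symm]
  rfl

lemma finrank_sup_singleton {K : Submodule F V} {v : V} (hv : v ∉ K) :
    finrank F ↥(K ⊔ Submodule.span F {v}) = finrank F K + 1 := by
  have hinf : K ⊓ Submodule.span F {v} = ⊥ := by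
    rw [eq_bot_iff]
    rintro x ⟨hxK, hxs⟩
    obtain ⟨c, rfl⟩ := Submodule.mem_span_singleton.mp hxs
    rcases eq_or_ne c 0 with rfl | hc
    · simp
    · exact absurd (by simpa [smul_smul, inv_mul_cancel₀ hc] using K.smul_mem c⁻¹ hxK : v ∈ K) hv
  have h0 : v ≠ 0 := fun h => hv (h ▸ K.zero_mem)
  have := Submodule.finrank_sup_add_finrank_inf_eq K (Submodule.span F {v})
  rw [hinf, finrank_span_singleton h0] at this
  simpa using this

lemma finrank_sup_le' (A B : Submodule F V) :
    finrank F ↥(A ⊔ B) ≤ finrank F A + finrank F B := by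
  have := Submodule.finrank_sup_add_finrank_inf_eq A B
  omega

/-- Dieudonné-type factorization: upper bound on reflection length for linear maps. -/
theorem dieudonne (hF : 2 < Nat.card F) :
    ∀ (n : ℕ) (f : V ≃ₗ[F] V), lrank f ≤ n →
    ∃ l : List (V ≃ₗ[F] V), (∀ s ∈ l, lrank s = 1) ∧ l.prod = f ∧ l.length ≤ n := by
  intro n
  induction n with
  | zero =>
    intro f hf
    refine ⟨[], by simp, ?_, by simp⟩
    have hr : LinearMap.range (dlt f) = ⊥ := Submodule.finrank_eq_zero.mp (Nat.le_zero.mp hf)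
    have hd : dlt f = 0 := LinearMap.range_eq_bot.mp hr
    have : ∀ x, f x = x := by
      intro x
      have := congrArg (fun m => m x) hd
      simpa [dlt_apply, sub_eq_zero] using this
    ext x
    simp [this x]
  | succ n ih =>
    intro f hf
    rcases eq_or_ne f 1 with rfl | hf1
    · exact ⟨[], by simp, by simp, by simp⟩
    · set K := LinearMap.ker (dlt f) with hK
      have hKtop : K ≠ ⊤ := by
        intro h
        apply hf1
        ext x
        have : x ∈ K := h ▸ Submodule.mem_top
        simpa using mem_ker_dlt.mp this
      obtain ⟨v, hv⟩ := exists_not_mem_of_ne_top K hKtop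
      have hfv : f v ∉ K := by
        intro h
        have h1 : f (f v) = f v := mem_ker_dlt.mp h
        have h2 : f (f v - v) = 0 := by rw [map_sub, h1, sub_self]
        have h3 : f v - v = 0 := by
          have := f.injective (a₁ := f v - v) (a₂ := 0) (by simpa using h2)
          exact this
        exact hv (mem_ker_dlt.mpr (by rw [sub_eq_zero] at h3; exact h3))
      obtain ⟨φ, hφK, hφfv, hφv⟩ := exists_dual_pair hF K hfv hv
      set w := v - f v with hwdef
      have hw1 : 1 + φ w ≠ 0 := by
        have : φ w = φ v - 1 := by rw [hwdef, map_sub, hφfv]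
        rw [this]
        simpa using hφv
      set s := tvE φ w hw1 with hs
      have hw0 : w ≠ 0 := by
        intro h
        rw [hwdef, sub_eq_zero] at h
        exact hv (mem_ker_dlt.mpr h.symm)
      have hsfv : s (f v) = v := by
        show f v + φ (f v) • w = v
        rw [hφfv, one_smul, hwdef]
        abel
      set g' := s * f with hg'
      have hg'app : ∀ x, g' x = s (f x) := fun _ => rfl
      have hKg' : ∀ k ∈ K, g' k = k := by
        intro k hk
        have hfk : f k = k := mem_ker_dlt.mp hk
        have hsk : s k = k := by
          show k + φ k • w = k
          rw [hφK k hk, zero_smul, add_zero]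
        rw [hg'app, hfk, hsk]
      have hg'v : g' v = v := by rw [hg'app, hsfv]
      have hsub : K ⊔ Submodule.span F {v} ≤ LinearMap.ker (dlt g') := by
        rw [sup_le_iff]
        exact ⟨fun k hk => mem_ker_dlt.mpr (hKg' k hk),
          (Submodule.span_singleton_le_iff_mem _ _).mpr (mem_ker_dlt.mpr hg'v)⟩
      have hrank : lrank g' ≤ n := by
        have h1 := lrank_add_ker g'
        have h2 := lrank_add_ker f
        have h3 : finrank F ↥(K ⊔ Submodule.span F {v}) ≤
            finrank F (LinearMap.ker (dlt g')) := Submodule.finrank_mono hsub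
        rw [finrank_sup_singleton hv] at h3
        rw [← hK] at h2
        omega
      obtain ⟨l', hl'refl, hl'prod, hl'len⟩ := ih g' hrank
      refine ⟨s⁻¹ :: l', ?_, ?_, ?_⟩
      · intro t ht
        rcases List.mem_cons.mp ht with rfl | ht'
        · rw [lrank_inv]
          exact lrank_tvE hw1 hφfv hw0
        · exact hl'refl t ht'
      · rw [List.prod_cons, hl'prod, ← mul_assoc, inv_mul_cancel, one_mul]
      · simp only [List.length_cons]
        omega


lemma isAffRefl_conjAff (p : P) (e : V ≃ₗ[F] V) (h : lrank e = 1) :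
    IsAffRefl (conjAff p e) := by
  refine ⟨AffineSubspace.mk' p (LinearMap.ker (dlt e)), ?_, ?_⟩
  · ext x
    simp only [Set.mem_setOf_eq, SetLike.mem_coe]
    rw [AffineSubspace.mem_mk', mem_ker_dlt]
    constructor
    · intro hx
      show e (x -ᵥ p) +ᵥ p = x
      rw [hx, vsub_vadd]
    · intro hx
      have hx' : e (x -ᵥ p) +ᵥ p = x := hx
      calc e (x -ᵥ p) = (e (x -ᵥ p) +ᵥ p) -ᵥ p := (vadd_vsub _ _).symm
        _ = x -ᵥ p := by rw [hx']
  · rw [AffineSubspace.direction_mk']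
    have h1 := lrank_add_ker e
    have h2 := Submodule.finrank_quotient_add_finrank (LinearMap.ker (dlt e))
    omega

lemma isAffRefl_move {r : P ≃ᵃ[F] P} (h : IsAffRefl r) :
    ∃ L : Submodule F V, finrank F L ≤ 1 ∧ ∀ x : P, r x -ᵥ x ∈ L := by
  obtain ⟨H, hfix, hdim⟩ := h
  rcases (H : Set P).eq_empty_or_nonempty with hemp | ⟨p0, hp0⟩
  · refine ⟨⊤, ?_, fun x => trivial⟩
    have hbot : H = ⊥ := (AffineSubspace.coe_eq_bot_iff H).mp hemp
    rw [hbot, AffineSubspace.direction_bot] at hdim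
    have h2 := Submodule.finrank_quotient_add_finrank (⊥ : Submodule F V)
    have h3 : finrank F (⊥ : Submodule F V) = 0 := finrank_bot F V
    have h4 : finrank F (⊤ : Submodule F V) = finrank F V := finrank_top F V
    omega
  · have hp0fix : r p0 = p0 := by
      rw [hfix] at hp0
      exact hp0
    have hdir : H.direction ≤ LinearMap.ker (dlt r.linear) := by
      intro k hk
      have hk' : k ∈ (H.direction : Set V) := hk
      rw [AffineSubspace.coe_direction_eq_vsub_set_right hp0] at hk'
      obtain ⟨p1, hp1, rfl⟩ := hk'
      have hp1fix : r p1 = p1 := by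
        rw [hfix] at hp1
        exact hp1
      rw [mem_ker_dlt]
      have : r.linear (p1 -ᵥ p0) = r p1 -ᵥ r p0 := by
        have := (r : P →ᵃ[F] P).linearMap_vsub p1 p0
        simpa using this
      rw [this, hp1fix, hp0fix]
    refine ⟨LinearMap.range (dlt r.linear), ?_, ?_⟩
    · show lrank r.linear ≤ 1
      have h1 := lrank_add_ker r.linear
      have h2 := Submodule.finrank_quotient_add_finrank H.direction
      have h3 : finrank F H.direction ≤ finrank F (LinearMap.ker (dlt r.linear)) :=
        Submodule.finrank_mono hdir
      omega
    · intro x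
      refine ⟨x -ᵥ p0, ?_⟩
      rw [dlt_apply]
      have h5 : r.linear (x -ᵥ p0) = r x -ᵥ r p0 := by
        have := (r : P →ᵃ[F] P).linearMap_vsub x p0
        simpa using this
      rw [h5, hp0fix]
      exact vsub_sub_vsub_cancel_right _ _ _

lemma moved_in : ∀ (l : List (P ≃ᵃ[F] P)), (∀ r ∈ l, IsAffRefl r) →
    ∃ S : Submodule F V, finrank F S ≤ l.length ∧ ∀ x : P, l.prod x -ᵥ x ∈ S := by
  intro l
  induction l with
  | nil =>
    intro _
    refine ⟨⊥, by simp, fun x => ?_⟩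
    have : ([] : List (P ≃ᵃ[F] P)).prod x = x := rfl
    simp [this]
  | cons r t ih =>
    intro hl
    obtain ⟨S, hS, hmov⟩ := ih (fun r' hr' => hl r' (List.mem_cons_of_mem _ hr'))
    obtain ⟨L, hL, hLmov⟩ := isAffRefl_move (hl r List.mem_cons_self)
    refine ⟨L ⊔ S, ?_, ?_⟩
    · calc finrank F ↥(L ⊔ S) ≤ finrank F L + finrank F S := finrank_sup_le' _ _
        _ ≤ 1 + t.length := by omega
        _ = (r :: t).length := by simp [List.length_cons]; omega
    · intro x
      have h0 : (r :: t).prod x = r (t.prod x) := by rw [List.prod_cons]; rfl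
      rw [h0]
      have h1 : r (t.prod x) -ᵥ t.prod x ∈ L := hLmov _
      have h2 : t.prod x -ᵥ x ∈ S := hmov x
      have h3 : r (t.prod x) -ᵥ x = (r (t.prod x) -ᵥ t.prod x) + (t.prod x -ᵥ x) :=
        (vsub_add_vsub_cancel _ _ _).symm
      rw [h3]
      exact add_mem (Submodule.mem_sup_left h1) (Submodule.mem_sup_right h2)


theorem stmt18_aux (hF : 2 < Nat.card F)
    (g : P ≃ᵃ[F] P)
    (hfix : ∀ a : P, g a ≠ a)
    (htrans : ∀ w : V, g ≠ AffineEquiv.constVAdd F P w) :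
    reflLenA g = (movDim g : ℕ∞) + 1 := by
  classical
  obtain ⟨o⟩ : Nonempty P := inferInstance
  set f := g.linear with hfdef
  set v0 := g o -ᵥ o with hv0def
  set W := LinearMap.range (dlt f) with hWdef
  set d := finrank F ↥W with hddef
  -- key identity
  have key : ∀ x : P, g x -ᵥ x = dlt f (x -ᵥ o) + v0 := by
    intro x
    have h1 : g x = f (x -ᵥ o) +ᵥ g o := by
      conv_lhs => rw [← vsub_vadd x o]
      exact g.map_vadd o (x -ᵥ o)
    rw [h1, vadd_vsub_assoc, dlt_apply]
    have h2 : g o -ᵥ x = (g o -ᵥ o) - (x -ᵥ o) := (vsub_sub_vsub_cancel_right _ _ _).symm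
    rw [h2, hv0def]
    abel
  have hkeyo : g o -ᵥ o = v0 := by rw [key o, vsub_self, map_zero, zero_add]
  -- parabolic conditions
  have hv0W : v0 ∉ W := by
    rintro ⟨u, hu⟩
    apply hfix ((-u) +ᵥ o)
    have h1 := key ((-u) +ᵥ o)
    rw [vadd_vsub, map_neg, hu] at h1
    rw [neg_add_cancel] at h1
    exact vsub_eq_zero_iff_eq.mp h1
  have hKtop : LinearMap.ker (dlt f) ≠ ⊤ := by
    intro htop
    have hdlt : dlt f = 0 := LinearMap.ker_eq_top.mp htop
    apply htrans v0
    ext x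
    have h1 := key x
    rw [hdlt] at h1
    simp only [LinearMap.zero_apply, zero_add] at h1
    show g x = v0 +ᵥ x
    rw [eq_vadd_iff_vsub_eq]
    exact h1
  -- moved space dimension
  have hspan : vectorSpan F (mov g) = W := by
    apply le_antisymm
    · rw [vectorSpan_def, Submodule.span_le]
      rintro z hz
      rw [Set.mem_vsub] at hz
      obtain ⟨a, ha, b, hb, rfl⟩ := hz
      obtain ⟨x, rfl⟩ := ha
      obtain ⟨y, rfl⟩ := hb
      have h1 : (g x -ᵥ x) -ᵥ (g y -ᵥ y) = dlt f ((x -ᵥ o) - (y -ᵥ o)) := by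
        rw [key x, key y, map_sub, vsub_eq_sub]
        abel
      rw [h1]
      exact ⟨_, rfl⟩
    · rintro z ⟨u, rfl⟩
      have h1 : dlt f u = (g (u +ᵥ o) -ᵥ (u +ᵥ o)) -ᵥ (g o -ᵥ o) := by
        rw [key (u +ᵥ o), vadd_vsub, hkeyo, vsub_eq_sub]
        abel
      rw [h1]
      exact vsub_mem_vectorSpan F ⟨u +ᵥ o, rfl⟩ ⟨o, rfl⟩
  have hmd : movDim g = d := by
    rw [movDim, hspan]
  -- lower bound
  have hlow : ∀ l : List (P ≃ᵃ[F] P), (∀ t ∈ l, IsAffRefl t) → l.prod = g →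
      d + 1 ≤ l.length := by
    intro l hrefl hprod
    obtain ⟨S, hS, hmovS⟩ := moved_in l hrefl
    rw [hprod] at hmovS
    have hv0S : v0 ∈ S := by
      have := hmovS o
      rwa [hkeyo] at this
    have hWS : W ≤ S := by
      rintro z ⟨u, rfl⟩
      have h1 := hmovS (u +ᵥ o)
      rw [key (u +ᵥ o), vadd_vsub] at h1
      have h2 := sub_mem h1 hv0S
      simpa using h2
    have hsupS : W ⊔ Submodule.span F {v0} ≤ S :=
      sup_le hWS ((Submodule.span_singleton_le_iff_mem _ _).mpr hv0S)
    have hfr : finrank F ↥(W ⊔ Submodule.span F {v0}) = d + 1 := finrank_sup_singleton hv0W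
    have := Submodule.finrank_mono hsupS
    omega
  -- upper bound construction
  obtain ⟨ψ, u, hψK, hψu, hψw⟩ := exists_dual_parab hF (LinearMap.ker (dlt f)) hKtop (o -ᵥ g o)
  have hw0 : (o -ᵥ g o) ≠ 0 := fun hc => hfix o (vsub_eq_zero_iff_eq.mp hc).symm
  have hinv1 : 1 + ψ (o -ᵥ g o) ≠ 0 := by
    intro hc
    exact hψw (by linear_combination hc)
  set e := tvE ψ (o -ᵥ g o) hinv1 with hedef
  set z0 := (ψ (g o -ᵥ o) - 1) • u +ᵥ o with hz0def
  have hz0val : ψ (g o -ᵥ z0) = 1 := by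
    rw [hz0def, vsub_vadd_eq_vsub_sub, map_sub, map_smul, hψu, smul_eq_mul, mul_one]
    ring
  set r := conjAff z0 e with hrdef
  have hro : r (g o) = o := by
    show e (g o -ᵥ z0) +ᵥ z0 = o
    rw [hedef]
    show ((g o -ᵥ z0) + ψ (g o -ᵥ z0) • (o -ᵥ g o)) +ᵥ z0 = o
    rw [hz0val, one_smul, add_comm, add_vadd, vsub_vadd, vsub_vadd]
  set gg := r * g with hggdef
  have hggo : gg o = o := hro
  have happ : ∀ x, gg.linear x = e (f x) := fun x => rfl
  have hkerlin : LinearMap.ker (dlt f) ≤ LinearMap.ker (dlt gg.linear) := by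
    intro k hk
    have hfk : f k = k := mem_ker_dlt.mp hk
    rw [mem_ker_dlt, happ k, hfk]
    show k + ψ k • (o -ᵥ g o) = k
    rw [hψK k hk, zero_smul, add_zero]
  have hrank : lrank gg.linear ≤ d := by
    have h1 := lrank_add_ker gg.linear
    have h2 := lrank_add_ker f
    have h3 := Submodule.finrank_mono hkerlin
    have h4 : lrank f = d := rfl
    omega
  obtain ⟨le, hlerefl, hleprod, hlelen⟩ := dieudonne hF d gg.linear hrank
  have hggconj : conjAff o gg.linear = gg := by
    ext x
    rw [conjAff_apply]
    have h5 : gg.linear (x -ᵥ o) = gg x -ᵥ gg o := by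
      have := (gg : P →ᵃ[F] P).linearMap_vsub x o
      simpa using this
    rw [h5, hggo, vsub_vadd]
  have hlaprod : (le.map (conjAff o)).prod = gg := by
    rw [← map_list_prod (conjAff o) le, hleprod, hggconj]
  have hre : lrank e = 1 := lrank_tvE hinv1 hψu hw0
  set L := r⁻¹ :: le.map (conjAff o) with hLdef
  have hreflL : ∀ t ∈ L, IsAffRefl t := by
    intro t ht
    rcases List.mem_cons.mp ht with rfl | ht'
    · have hrinv : r⁻¹ = conjAff z0 e⁻¹ := by
        rw [hrdef, ← map_inv]
      rw [hrinv]
      exact isAffRefl_conjAff z0 e⁻¹ (by rw [lrank_inv]; exact hre)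
    · rw [List.mem_map] at ht'
      obtain ⟨s, hs, rfl⟩ := ht'
      exact isAffRefl_conjAff o s (hlerefl s hs)
  have hprodL : L.prod = g := by
    rw [hLdef, List.prod_cons, hlaprod, hggdef, inv_mul_cancel_left]
  have hlenL : L.length ≤ d + 1 := by
    rw [hLdef]
    simp only [List.length_cons, List.length_map]
    omega
  -- conclude
  rw [hmd]
  apply le_antisymm
  · have hmem : ((L.length : ℕ) : ℕ∞) ∈ {n : ℕ∞ | ∃ l : List (P ≃ᵃ[F] P),
        (∀ t ∈ l, IsAffRefl t) ∧ l.prod = g ∧ (l.length : ℕ∞) = n} :=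
      ⟨L, hreflL, hprodL, rfl⟩
    calc reflLenA g ≤ ((L.length : ℕ) : ℕ∞) := sInf_le hmem
      _ ≤ ((d + 1 : ℕ) : ℕ∞) := by exact_mod_cast hlenL
      _ = (d : ℕ∞) + 1 := by push_cast; rfl
  · apply le_sInf
    rintro b ⟨l, hlrefl, hlprod, rfl⟩
    have := hlow l hlrefl hlprod
    calc (d : ℕ∞) + 1 = ((d + 1 : ℕ) : ℕ∞) := by push_cast; rfl
      _ ≤ ((l.length : ℕ) : ℕ∞) := by exact_mod_cast this

end FD

end Stmt18Aux

theorem stmt18 {F V P : Type*} [Field F] [AddCommGroup V] [Module F V]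
    [FiniteDimensional F V] [AddTorsor V P]
    (hF : 2 < Nat.card F)
    (g : P ≃ᵃ[F] P)
    (hfix : ∀ a : P, g a ≠ a)
    (htrans : ∀ w : V, g ≠ AffineEquiv.constVAdd F P w) :
    reflLenA g = (movDim g : ℕ∞) + 1 :=
  stmt18_aux hF g hfix htrans
end

section
/- Over the field F₂, if g̃ ∈ GA(Ṽ) has no fixed point and (a + fix_lin(g̃)) ∪ (g̃(a) + fix_lin(g̃)) = Ṽ for every point a, then either g̃ is a translation or fix_lin(g̃) is a hyperplane in V and g̃ is a glide reflection (a reflection composed with a translation). -/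
open Module Pointwise

/-!
Fix a point `a`, put `c = g a -ᵥ a` and `K = ker (g.linear - 1)`. Then
`g x -ᵥ x = (g.linear - 1) (x -ᵥ a) + c`, so the covering hypothesis at `a` says
`V = K ∪ (c + K)`. If `c ∈ K` this forces `K = V`, and `g` is the translation by `c`.
Otherwise `V ⧸ K = {0, [c]}` is a line, and `g` followed by the translation by `-c` fixes
exactly the points with `g x -ᵥ x = c`, i.e. the hyperplane `a + K`.
-/

theorem mem_or_sub_vsub_mem_of_image_vadd_union_eq_univ {V P : Type*} [AddCommGroup V]
    [AddTorsor V P]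
    {K : Set V} {a b : P} (h : (· +ᵥ a) '' K ∪ (· +ᵥ b) '' K = Set.univ) (v : V) :
    v ∈ K ∨ v - (b -ᵥ a) ∈ K := by
  have hv : v +ᵥ a ∈ (· +ᵥ a) '' K ∪ (· +ᵥ b) '' K := h ▸ Set.mem_univ _
  rcases hv with ⟨k, hk, hka⟩ | ⟨k, hk, hkb⟩
  · exact .inl (vadd_right_cancel a hka ▸ hk)
  · have hkv : k = v - (b -ᵥ a) := by
      rw [← (eq_vadd_iff_vsub_eq _ _ _).1 hkb.symm, vadd_vsub_assoc, sub_eq_add_neg,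
        neg_vsub_eq_vsub_rev]
    exact .inr (hkv ▸ hk)

theorem Submodule.eq_top_of_mem_or_sub_mem {F V : Type*} [Ring F] [AddCommGroup V]
    [Module F V]
    {K : Submodule F V} {c : V} (hc : c ∈ K) (hK : ∀ v, v ∈ K ∨ v - c ∈ K) : K = ⊤ :=
  K.eq_top_iff'.2 fun v => (hK v).elim id fun h => by simpa using K.add_mem h hc

theorem Submodule.finrank_quotient_eq_one_of_mem_or_sub_mem {F V : Type*} [Field F]
    [AddCommGroup V] [Module F V] {K : Submodule F V} {c : V} (hc : c ∉ K)
    (hK : ∀ v, v ∈ K ∨ v - c ∈ K) : finrank F (V ⧸ K) = 1 := by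
  refine finrank_eq_one (K.mkQ c) (by simpa [Submodule.Quotient.mk_eq_zero] using hc) ?_
  intro w
  obtain ⟨v, rfl⟩ := K.mkQ_surjective w
  rcases hK v with h | h
  · exact ⟨0, by simpa [eq_comm (a := (0 : V ⧸ K)), Submodule.Quotient.mk_eq_zero] using h⟩
  · exact ⟨1, by simpa [Submodule.Quotient.eq] using K.neg_mem h⟩

namespace AffineEquiv

variable {k V P : Type*} [Ring k] [AddCommGroup V] [Module k V] [AddTorsor V P]

theorem apply_vsub_self_eq (g : P ≃ᵃ[k] P) (a x : P) :
    g x -ᵥ x = ((g.linear : V →ₗ[k] V) - 1) (x -ᵥ a) + (g a -ᵥ a) := by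
  have hlin : g.linear (x -ᵥ a) = g x -ᵥ g a := g.toAffineMap.linearMap_vsub x a
  rw [LinearMap.sub_apply, LinearEquiv.coe_coe, hlin, Module.End.one_apply,
    sub_add_eq_add_sub, vsub_add_vsub_cancel, vsub_sub_vsub_cancel_right]

theorem constVAdd_inv_mul_apply_eq_self_iff (g : P ≃ᵃ[k] P) (a x : P) :
    ((constVAdd k P (g a -ᵥ a))⁻¹ * g) x = x ↔
      x -ᵥ a ∈ LinearMap.ker ((g.linear : V →ₗ[k] V) - 1) := by
  rw [coe_mul, Function.comp_apply, inv_def, symm_apply_eq, constVAdd_apply,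
    eq_vadd_iff_vsub_eq, apply_vsub_self_eq g a, add_eq_right, LinearMap.mem_ker]

theorem eq_constVAdd_of_ker_eq_top (g : P ≃ᵃ[k] P) (a : P)
    (h : LinearMap.ker ((g.linear : V →ₗ[k] V) - 1) = ⊤) :
    g = constVAdd k P (g a -ᵥ a) := by
  have hr : (constVAdd k P (g a -ᵥ a))⁻¹ * g = 1 :=
    ext fun x => (g.constVAdd_inv_mul_apply_eq_self_iff a x).2 (h ▸ Submodule.mem_top)
  exact (inv_mul_eq_one.1 hr).symm

theorem isAffRefl_constVAdd_inv_mul {F : Type*} [Field F] [Module F V] (g : P ≃ᵃ[F] P)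
    (a : P)
    (h : finrank F (V ⧸ LinearMap.ker ((g.linear : V →ₗ[F] V) - 1)) = 1) :
    IsAffRefl ((constVAdd F P (g a -ᵥ a))⁻¹ * g) := by
  refine ⟨AffineSubspace.mk' a (LinearMap.ker ((g.linear : V →ₗ[F] V) - 1)), ?_, ?_⟩
  · ext x
    rw [Set.mem_ofPred_eq, constVAdd_inv_mul_apply_eq_self_iff, SetLike.mem_coe,
      AffineSubspace.mem_mk']
  · rwa [AffineSubspace.direction_mk']

end AffineEquiv

theorem stmt19_general {V P : Type*} [AddCommGroup V] [Module (ZMod 2) V]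
    [AddTorsor V P]
    (g : P ≃ᵃ[ZMod 2] P)
    (hcov : ∀ a : P,
      ((· +ᵥ a) '' (LinearMap.ker ((g.linear : V →ₗ[ZMod 2] V) - 1) : Set V)) ∪
        ((· +ᵥ g a) '' (LinearMap.ker ((g.linear : V →ₗ[ZMod 2] V) - 1) : Set V)) =
          Set.univ) :
    (∃ w : V, g = AffineEquiv.constVAdd (ZMod 2) P w) ∨
      (Module.finrank (ZMod 2)
          (V ⧸ LinearMap.ker ((g.linear : V →ₗ[ZMod 2] V) - 1)) = 1 ∧
        ∃ (r : P ≃ᵃ[ZMod 2] P) (w : V), IsAffRefl r ∧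
          g = AffineEquiv.constVAdd (ZMod 2) P w * r) := by
  obtain ⟨a⟩ : Nonempty P := inferInstance
  set K := LinearMap.ker ((g.linear : V →ₗ[ZMod 2] V) - 1)
  have hK : ∀ v, v ∈ K ∨ v - (g a -ᵥ a) ∈ K :=
    mem_or_sub_vsub_mem_of_image_vadd_union_eq_univ (hcov a)
  by_cases hc : g a -ᵥ a ∈ K
  · exact .inl ⟨_, g.eq_constVAdd_of_ker_eq_top a (K.eq_top_of_mem_or_sub_mem hc hK)⟩
  · have hrank := K.finrank_quotient_eq_one_of_mem_or_sub_mem hc hK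
    exact .inr ⟨hrank, _, _, g.isAffRefl_constVAdd_inv_mul a hrank,
      (mul_inv_cancel_left _ _).symm⟩

theorem stmt19 {V P : Type*} [AddCommGroup V] [Module (ZMod 2) V]
    [FiniteDimensional (ZMod 2) V] [AddTorsor V P]
    (g : P ≃ᵃ[ZMod 2] P)
    (hfix : ∀ a : P, g a ≠ a)
    (hcov : ∀ a : P,
      ((· +ᵥ a) '' (LinearMap.ker ((g.linear : V →ₗ[ZMod 2] V) - 1) : Set V)) ∪
        ((· +ᵥ g a) '' (LinearMap.ker ((g.linear : V →ₗ[ZMod 2] V) - 1) : Set V)) =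
          Set.univ) :
    (∃ w : V, g = AffineEquiv.constVAdd (ZMod 2) P w) ∨
      (Module.finrank (ZMod 2)
          (V ⧸ LinearMap.ker ((g.linear : V →ₗ[ZMod 2] V) - 1)) = 1 ∧
        ∃ (r : P ≃ᵃ[ZMod 2] P) (w : V), IsAffRefl r ∧
          g = AffineEquiv.constVAdd (ZMod 2) P w * r) :=
  stmt19_general g hcov
end
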